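/- arXiv:2308.11613 — 8 statements merged into one kernel-verified Lean document; each statement's English description precedes it below -/
import Mathlib

section
/- Let $m$ be an even positive integer and let $n \ge 1$. Define $T(n)$ to be the set of pairs $(x,y)$ with $1 \le x < y \le m$, $x + y \equiv n \pmod{m+1}$, and $x + y \le n$. Then $|T(n)| \ge \min\{n/2, m/2\} - 1$. -/
/-!
The sums `x + y` allowed in `T(n)` form the residue class of `n` modulo `m + 1`, cut off at `n`,
and the pairs with a fixed sum `s` are the `(x, s - x)` with `max 1 (s - m) ≤ x ≤ (s - 1) / 2`.
If `n ≤ m` the sum `s = n` alone gives `(n - 1) / 2` pairs. Otherwise, with `r = n % (m + 1)`,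
the sums `r` and `r + m + 1` both lie below `n` and together give `(r - 1) / 2 + (m - r) / 2`
pairs, at least `m / 2 - 1` for even `m` whatever the parity of `r`.
-/

open Finset

/-- The set `T(n)` of the statement. -/
def pairsT (m n : ℕ) : Finset (ℕ × ℕ) :=
  (Icc 1 m ×ˢ Icc 1 m).filter
    (fun p : ℕ × ℕ => p.1 < p.2 ∧ (p.1 + p.2) % (m + 1) = n % (m + 1) ∧ p.1 + p.2 ≤ n)

theorem Finset.card_filter_add_card_filter_le {α : Type*} {s : Finset α} {p q : α → Prop}
    [DecidablePred p] [DecidablePred q] (h : ∀ a ∈ s, q a → ¬p a) :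
    #(s.filter p) + #(s.filter q) ≤ #s :=
  calc #(s.filter p) + #(s.filter q)
      ≤ #(s.filter p) + #(s.filter (fun a => ¬p a)) := by grw [monotone_filter_right s h]
    _ = #s := card_filter_add_card_filter_not p

/-- Truncated subtraction makes the bound `0` for `s = 0` and handles `s ≤ m` and `s > m` at once:
the pairs with sum `s` are indexed by `x ∈ (s - 1 - m, (s - 1) / 2]`. -/
theorem le_card_pairsT_filter_sum_eq {m n s : ℕ} (hs : s % (m + 1) = n % (m + 1)) (hsn : s ≤ n) :
    (s - 1) / 2 - (s - 1 - m) ≤ #((pairsT m n).filter (fun p => p.1 + p.2 = s)) := by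
  rw [← Nat.card_Ioc]
  refine card_le_card_of_injOn (fun x => (x, s - x)) (fun x hx => ?_)
    (fun a _ b _ h => congrArg Prod.fst h)
  simp only [coe_Ioc, Set.mem_Ioc] at hx
  have hsum : x + (s - x) = s := by omega
  simp only [pairsT, coe_filter, mem_filter, mem_product, mem_Icc, Set.mem_ofPred_eq, hsum, hs, hsn,
    and_true]
  omega

theorem min_le_two_mul_card_pairsT_add_two {m : ℕ} (n : ℕ) (hm : Even m) :
    min n m ≤ 2 * #(pairsT m n) + 2 := by
  rcases le_or_gt n m with hnm | hmn
  · have h_n := le_card_pairsT_filter_sum_eq (m := m) (s := n) rfl le_rfl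
    have h_le := card_filter_le (pairsT m n) (fun p => p.1 + p.2 = n)
    omega
  · have hrn : n % (m + 1) + (m + 1) ≤ n := by
      have hq : 0 < n / (m + 1) := Nat.div_pos hmn (Nat.succ_pos m)
      have := Nat.mod_add_div n (m + 1)
      nlinarith
    generalize hr : n % (m + 1) = r at hrn
    have hrm : r < m + 1 := hr ▸ Nat.mod_lt _ m.succ_pos
    have h_r := le_card_pairsT_filter_sum_eq (by rw [Nat.mod_eq_of_lt hrm, hr]) (by omega : r ≤ n)
    have h_rm := le_card_pairsT_filter_sum_eq
      (by rw [Nat.add_mod_right, Nat.mod_eq_of_lt hrm, hr]) hrn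
    have h_le := card_filter_add_card_filter_le (s := pairsT m n)
      (p := fun p => p.1 + p.2 = r) (q := fun p => p.1 + p.2 = r + (m + 1)) (by grind)
    obtain ⟨k, rfl⟩ := hm
    omega

theorem Tn_lower_bound_general (m n : ℕ) (hmeven : Even m) :
    min ((n : ℚ) / 2) ((m : ℚ) / 2) - 1 ≤
      ((Finset.Icc 1 m ×ˢ Finset.Icc 1 m).filter
        (fun p : ℕ × ℕ =>
          p.1 < p.2 ∧ (p.1 + p.2) % (m + 1) = n % (m + 1) ∧ p.1 + p.2 ≤ n)).card := by
  have key : min (n : ℚ) m ≤ 2 * #(pairsT m n) + 2 := by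
    exact_mod_cast min_le_two_mul_card_pairsT_add_two n hmeven
  rw [min_div_div_right zero_le_two]
  change _ ≤ (#(pairsT m n) : ℚ)
  linarith

/-- For even `m` and `n ≥ 1`, the set `T(n)` of pairs `(x, y)` with `1 ≤ x < y ≤ m`,
`x + y ≡ n (mod m+1)` and `x + y ≤ n` has size at least `min (n/2) (m/2) - 1`. -/
theorem Tn_lower_bound (m n : ℕ) (hm : 0 < m) (hmeven : Even m) (hn : 1 ≤ n) :
    min ((n : ℚ) / 2) ((m : ℚ) / 2) - 1 ≤
      ((Finset.Icc 1 m ×ˢ Finset.Icc 1 m).filter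
        (fun p : ℕ × ℕ =>
          p.1 < p.2 ∧ (p.1 + p.2) % (m + 1) = n % (m + 1) ∧ p.1 + p.2 ≤ n)).card :=
  Tn_lower_bound_general m n hmeven
end

section
/- Let $\ell, k$ be positive integers and $s_1, \ldots, s_\ell$ positive integers with $\sum_{i=1}^\ell s_i \ge k + \ell$. Then there exist a positive integer $s$ and non-negative integers $\sigma_1, \ldots, \sigma_\ell$ such that $\sigma_i s \le s_i$ for all $i$, $\sum_i \sigma_i = k$, and $\sum_i s_i - sk \le \frac{\ell}{k}\sum_i s_i + k$. -/
lemma exists_le_sum_eq {n : ℕ} (f : Fin n → ℕ) (k : ℕ) (h : k ≤ ∑ i, f i) :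
    ∃ σ : Fin n → ℕ, (∀ i, σ i ≤ f i) ∧ ∑ i, σ i = k := by
  induction k with
  | zero => exact ⟨0, fun i => Nat.zero_le _, by simp⟩
  | succ k ih =>
    obtain ⟨σ, hσ, hsum⟩ := ih (Nat.le_of_succ_le h)
    have hex : ∃ i, σ i < f i := by
      by_contra hc
      push_neg at hc
      have : ∑ i, f i ≤ ∑ i, σ i := Finset.sum_le_sum fun i _ => hc i
      omega
    obtain ⟨i, hi⟩ := hex
    refine ⟨Function.update σ i (σ i + 1), fun j => ?_, ?_⟩
    · by_cases hj : j = i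
      · subst hj; simp [Function.update_self]; omega
      · simp [Function.update_of_ne hj]; exact hσ j
    · rw [Finset.sum_update_of_mem (Finset.mem_univ i)]
      have h2 := Finset.sum_eq_sum_sdiff_singleton_add (Finset.mem_univ i) σ
      omega

/-- Proposition: given positive integers `s 1, …, s ℓ` with `∑ s i ≥ k + ℓ`, there are a
positive integer `s` and nonnegative integers `σ i` with `σ i * s ≤ s i`, `∑ σ i = k` and
`∑ s i - s * k ≤ (ℓ / k) * ∑ s i + k`. -/
theorem division_proposition
    (ℓ k : ℕ) (hl : 0 < ℓ) (hk : 0 < k) (s : Fin ℓ → ℕ) (hs : ∀ i, 0 < s i)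
    (hsum : k + ℓ ≤ ∑ i, s i) :
    ∃ (t : ℕ) (σ : Fin ℓ → ℕ), 0 < t ∧ (∀ i, σ i * t ≤ s i) ∧ (∑ i, σ i = k) ∧
      ((∑ i, s i : ℚ) - t * k ≤ (ℓ : ℚ) / k * (∑ i, s i) + k) := by
  set S := ∑ i, s i with hS
  set t := S / (k + ℓ) with ht
  have hkl : 0 < k + ℓ := by omega
  have ht0 : 0 < t := Nat.div_pos hsum hkl
  have hlow : t * (k + ℓ) ≤ S := Nat.div_mul_le_self S (k + ℓ)
  have hhigh : S < (t + 1) * (k + ℓ) := (Nat.div_lt_iff_lt_mul hkl).mp (Nat.lt_succ_self _)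
  -- k ≤ ∑ s i / t
  have hkf : k ≤ ∑ i, s i / t := by
    have h1 : ∀ i, s i < (s i / t + 1) * t := fun i => (Nat.div_lt_iff_lt_mul ht0).mp (Nat.lt_succ_self _)
    have h2 : S < (∑ i, (s i / t + 1)) * t := by
      rw [Finset.sum_mul, hS]
      exact Finset.sum_lt_sum_of_nonempty ⟨⟨0, hl⟩, Finset.mem_univ _⟩ (fun i _ => h1 i)
    have h3 : (∑ i, (s i / t + 1)) = (∑ i, s i / t) + ℓ := by
      rw [Finset.sum_add_distrib]; simp
    rw [h3, Nat.add_mul] at h2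
    have : k * t + ℓ * t ≤ S := by
      calc k * t + ℓ * t = t * (k + ℓ) := by ring
        _ ≤ S := hlow
    have h4 : k * t < (∑ i, s i / t) * t := by omega
    exact le_of_lt (Nat.lt_of_mul_lt_mul_right h4)
  obtain ⟨σ, hσle, hσsum⟩ := exists_le_sum_eq (fun i => s i / t) k hkf
  refine ⟨t, σ, ht0, fun i => ?_, hσsum, ?_⟩
  · calc σ i * t ≤ (s i / t) * t := Nat.mul_le_mul_right t (hσle i)
      _ ≤ s i := Nat.div_mul_le_self _ _
  · have hSQ : (0:ℚ) ≤ (S:ℚ) := Nat.cast_nonneg S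
    have hkQ : (0:ℚ) < k := by exact_mod_cast hk
    have hlQ : (0:ℚ) < ℓ := by exact_mod_cast hl
    have hhQ : (S:ℚ) < ((t:ℚ) + 1) * (k + ℓ) := by exact_mod_cast hhigh
    have hcast : (∑ i, (s i : ℚ)) = (S : ℚ) := by rw [hS]; push_cast; rfl
    have key : ((S:ℚ) - t*k - k) * k ≤ ℓ * S := by
      have htQ : (0:ℚ) ≤ t := Nat.cast_nonneg t
      rcases le_or_gt (k:ℚ) (ℓ:ℚ) with hle | hlt
      · nlinarith [mul_nonneg hSQ (sub_nonneg.mpr hle),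
          mul_nonneg (mul_nonneg htQ hkQ.le) hkQ.le]
      · nlinarith [mul_lt_mul_of_pos_right hhQ (sub_pos.mpr hlt),
          mul_nonneg (mul_nonneg htQ hlQ.le) hlQ.le, mul_nonneg hlQ.le hlQ.le]
    rw [hcast, div_mul_eq_mul_div, ← sub_le_iff_le_add]
    exact (le_div_iff₀ hkQ).mpr key
end

section
/- Let $M_1, \ldots, M_k$ be pairwise edge-disjoint matchings in a graph $G$. Then there exist pairwise edge-disjoint matchings $M_1', \ldots, M_k'$ in $G$ with $\bigcup_i M_i' = \bigcup_i M_i$ (as edge sets) such that the sizes of any two of the $M_i'$ differ by at most one. -/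
/-!
If `#(M j) + 2 ≤ #(M i)`, some connected component of the graph with edge set `M i ∪ M j`
contains more edges of `M i` than of `M j`. Its `M i`-edges cover twice as many vertices as
there are of them, while a connected graph with `m` edges has at most `m + 1` vertices; so the
component has exactly one more edge of `M i` than of `M j`, and exchanging the roles of the two
matchings on it moves one edge from `M i` to `M j`. This strictly decreases `∑ i, #(M i) ^ 2`,
so a decomposition of the same edge set minimising that sum is balanced.
-/

def IsMatchingEdgeSet {V : Type*} (M : Finset (Sym2 V)) : Prop :=
  (∀ e ∈ M, ¬ e.IsDiag) ∧ ∀ e ∈ M, ∀ f ∈ M, e ≠ f → ∀ v : V, ¬(v ∈ e ∧ v ∈ f)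

open Finset Function

namespace IsMatchingEdgeSet

variable {V : Type*} {A B X Y : Finset (Sym2 V)}

lemma mono (hA : IsMatchingEdgeSet A) (h : B ⊆ A) : IsMatchingEdgeSet B :=
  ⟨fun e he => hA.1 e (h he), fun e he f hf => hA.2 e (h he) f (h hf)⟩

variable [DecidableEq V]

lemma two_mul_card_le_ncard (hA : IsMatchingEdgeSet A) {U : Set V}
    (hU : U.Finite) (hAU : ∀ e ∈ A, ∀ v ∈ e, v ∈ U) : 2 * #A ≤ U.ncard := by
  have hcover : #(A.biUnion Sym2.toFinset) = 2 * #A := by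
    rw [card_biUnion fun e he f hf hne => disjoint_left.mpr fun v hve hvf =>
        hA.2 e he f hf hne v ⟨Sym2.mem_toFinset.mp hve, Sym2.mem_toFinset.mp hvf⟩,
      sum_congr rfl fun e he => Sym2.card_toFinset_of_not_isDiag e (hA.1 e he), sum_const,
      smul_eq_mul, mul_comm]
  rw [← hcover, ← Set.ncard_coe_finset]
  refine Set.ncard_le_ncard (fun v hv => ?_) hU
  obtain ⟨e, he, hve⟩ := mem_biUnion.mp hv
  exact hAU e he v (Sym2.mem_toFinset.mp hve)

lemma sdiff_union (hA : IsMatchingEdgeSet A) (hB : IsMatchingEdgeSet B) (hY : Y ⊆ B)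
    (hX : ∀ f ∈ A, ∀ e ∈ Y, ∀ v, v ∈ e → v ∈ f → f ∈ X) :
    IsMatchingEdgeSet (A \ X ∪ Y) := by
  refine ⟨fun e he => ?_, fun e he f hf hne v ⟨hve, hvf⟩ => ?_⟩
  · rcases mem_union.mp he with he | he
    exacts [hA.1 e (mem_sdiff.mp he).1, hB.1 e (hY he)]
  · rcases mem_union.mp he with he | he <;> rcases mem_union.mp hf with hf | hf
    · exact hA.2 e (mem_sdiff.mp he).1 f (mem_sdiff.mp hf).1 hne v ⟨hve, hvf⟩
    · exact (mem_sdiff.mp he).2 (hX e (mem_sdiff.mp he).1 f hf v hvf hve)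
    · exact (mem_sdiff.mp hf).2 (hX f (mem_sdiff.mp hf).1 e he v hve hvf)
    · exact hB.2 e (hY he) f (hY hf) hne v ⟨hve, hvf⟩

end IsMatchingEdgeSet

namespace SimpleGraph

variable {V : Type*} {G : SimpleGraph V}

lemma connectedComponentMk_eq_of_mem_edgeSet {e : Sym2 V} (he : e ∈ G.edgeSet) {v w : V}
    (hv : v ∈ e) (hw : w ∈ e) : G.connectedComponentMk v = G.connectedComponentMk w := by
  rcases eq_or_ne v w with rfl | hne
  · rfl
  · rw [(Sym2.mem_and_mem_iff hne).mp ⟨hv, hw⟩, mem_edgeSet] at he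
    exact ConnectedComponent.eq.mpr he.reachable

lemma ConnectedComponent.ncard_supp_le_card_add_one [Finite V] (c : G.ConnectedComponent)
    {E : Finset (Sym2 V)} (hE : ∀ u v, u ∈ c → G.Adj u v → s(u, v) ∈ E) :
    c.supp.ncard ≤ #E + 1 := by
  rw [← Nat.card_coe_set_eq]
  refine c.connected_toSimpleGraph.card_vert_le_card_edgeSet_add_one.trans ?_
  gcongr
  have hmap : ∀ e ∈ c.toSimpleGraph.edgeSet, Sym2.map Subtype.val e ∈ E := by
    intro e
    induction e using Sym2.ind with
    | _ u v => exact hE u v u.2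
  calc Nat.card c.toSimpleGraph.edgeSet ≤ Nat.card (E : Set (Sym2 V)) :=
        Nat.card_le_card_of_injective (fun e => ⟨_, hmap e.1 e.2⟩) fun e f h =>
          Subtype.ext (Sym2.map.injective Subtype.val_injective (congrArg Subtype.val h))
    _ = #E := by rw [Nat.card_coe_set_eq, Set.ncard_coe_finset]

end SimpleGraph

namespace IsMatchingEdgeSet

variable {V : Type*} [DecidableEq V] [Finite V] {A B : Finset (Sym2 V)}

lemma exists_closed_parts (hA : IsMatchingEdgeSet A) (hB : IsMatchingEdgeSet B)
    (hAB : Disjoint A B) (hlt : #B < #A) :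
    ∃ X ⊆ A, ∃ Y ⊆ B, (∀ f ∈ A, ∀ e ∈ Y, ∀ v, v ∈ e → v ∈ f → f ∈ X) ∧
      (∀ f ∈ B, ∀ e ∈ X, ∀ v, v ∈ e → v ∈ f → f ∈ Y) ∧ #X = #Y + 1 := by
  classical
  set H := SimpleGraph.fromEdgeSet (↑(A ∪ B) : Set (Sym2 V))
  -- `e.out.1` is an arbitrary endpoint of `e`; for the edges of `H` the choice is irrelevant.
  let comp : Sym2 V → H.ConnectedComponent := fun e => H.connectedComponentMk e.out.1
  have hcomp : ∀ e ∈ A ∪ B, ∀ v ∈ e, H.connectedComponentMk v = comp e := by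
    intro e he v hv
    have hH : e ∈ H.edgeSet := by
      rw [SimpleGraph.edgeSet_fromEdgeSet]
      exact ⟨he, (mem_union.mp he).elim (hA.1 e) (hB.1 e)⟩
    exact SimpleGraph.connectedComponentMk_eq_of_mem_edgeSet hH hv e.out_fst_mem
  have hmaps : ∀ D ⊆ A ∪ B, (D : Set (Sym2 V)).MapsTo comp ((A ∪ B).image comp) :=
    fun D hD e he => mem_image_of_mem comp (hD he)
  obtain ⟨c, -, hc⟩ : ∃ c ∈ (A ∪ B).image comp,
      #{e ∈ B | comp e = c} < #{e ∈ A | comp e = c} := by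
    refine exists_lt_of_sum_lt ?_
    rwa [← card_eq_sum_card_fiberwise (hmaps A subset_union_left),
      ← card_eq_sum_card_fiberwise (hmaps B subset_union_right)]
  have hmem : ∀ e ∈ A ∪ B, ∀ v ∈ e, (comp e = c ↔ v ∈ c.supp) := fun e he v hv => by
    rw [SimpleGraph.ConnectedComponent.mem_supp_iff, hcomp e he v hv]
  set X := {e ∈ A | comp e = c}
  set Y := {e ∈ B | comp e = c}
  refine ⟨X, filter_subset _ _, Y, filter_subset _ _, ?_, ?_, le_antisymm ?_ hc⟩
  · exact fun f hf e he v hve hvf => mem_filter.mpr ⟨hf,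
      (hmem f (mem_union_left _ hf) v hvf).mpr
        ((hmem e (mem_union_right _ (filter_subset _ _ he)) v hve).mp (mem_filter.mp he).2)⟩
  · exact fun f hf e he v hve hvf => mem_filter.mpr ⟨hf,
      (hmem f (mem_union_right _ hf) v hvf).mpr
        ((hmem e (mem_union_left _ (filter_subset _ _ he)) v hve).mp (mem_filter.mp he).2)⟩
  have hvert : 2 * #X ≤ c.supp.ncard :=
    (hA.mono (filter_subset _ _)).two_mul_card_le_ncard (Set.toFinite _) fun e he v hv =>
      (hmem e (subset_union_left (filter_subset _ _ he)) v hv).mp (mem_filter.mp he).2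
  have hedge : c.supp.ncard ≤ #(X ∪ Y) + 1 := by
    refine c.ncard_supp_le_card_add_one fun u v hu huv => ?_
    have huv' : s(u, v) ∈ A ∪ B := ((SimpleGraph.fromEdgeSet_adj _).mp huv).1
    have hc' : comp s(u, v) = c := (hmem _ huv' u (Sym2.mem_mk_left u v)).mpr hu
    rcases mem_union.mp huv' with h | h
    exacts [mem_union_left _ (mem_filter.mpr ⟨h, hc'⟩),
      mem_union_right _ (mem_filter.mpr ⟨h, hc'⟩)]
  have hXY : #(X ∪ Y) = #X + #Y := card_union_of_disjoint (disjoint_filter_filter hAB)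
  omega

lemma exists_exchange (hA : IsMatchingEdgeSet A) (hB : IsMatchingEdgeSet B)
    (hAB : Disjoint A B) (hlt : #B < #A) :
    ∃ A' B' : Finset (Sym2 V), IsMatchingEdgeSet A' ∧ IsMatchingEdgeSet B' ∧ Disjoint A' B' ∧
      A' ∪ B' = A ∪ B ∧ #A' + 1 = #A ∧ #B' = #B + 1 := by
  obtain ⟨X, hXA, Y, hYB, hXcl, hYcl, hXY⟩ := exists_closed_parts hA hB hAB hlt
  refine ⟨A \ X ∪ Y, B \ Y ∪ X, hA.sdiff_union hB hYB hXcl, hB.sdiff_union hA hXA hYcl,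
    ?_, ?_, ?_, ?_⟩
  · rw [disjoint_union_left, disjoint_union_right, disjoint_union_right]
    exact ⟨⟨hAB.mono sdiff_subset sdiff_subset, sdiff_disjoint⟩,
      disjoint_sdiff, (hAB.mono hXA hYB).symm⟩
  · ext e
    simp only [mem_union, mem_sdiff]
    have := @hXA e
    have := @hYB e
    tauto
  · rw [card_union_of_disjoint (hAB.mono sdiff_subset hYB), card_sdiff_of_subset hXA]
    have := card_le_card hXA
    omega
  · rw [card_union_of_disjoint (hAB.symm.mono sdiff_subset hXA), card_sdiff_of_subset hYB]
    have := card_le_card hYB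
    omega

end IsMatchingEdgeSet

section update

variable {ι α β : Type*} [DecidableEq ι] {i j : ι}

lemma Finset.sum_comp_update_update_add [Fintype ι] [AddCommMonoid β] (F : α → β) (M : ι → α)
    (hij : i ≠ j) (a b : α) : ∑ l, F (update (update M i a) j b l) + (F (M i) + F (M j)) =
      ∑ l, F (M l) + (F a + F b) := by
  have hrest : ∑ l ∈ {i, j}ᶜ, F (update (update M i a) j b l) = ∑ l ∈ {i, j}ᶜ, F (M l) :=
    sum_congr rfl fun l hl => by
      rw [mem_compl, mem_insert, mem_singleton, not_or] at hl
      rw [update_of_ne hl.2, update_of_ne hl.1]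
  rw [← sum_add_sum_compl {i, j}, ← sum_add_sum_compl {i, j} (fun l => F (M l)), hrest,
    sum_pair hij, sum_pair hij, update_of_ne hij, update_self, update_self]
  abel

variable [DecidableEq α] {M : ι → Finset α} {A B : Finset α}

lemma Finset.pairwise_disjoint_update_update (hM : Pairwise (Disjoint on M)) (hij : i ≠ j)
    (hAB : Disjoint A B) (hU : A ∪ B = M i ∪ M j) :
    Pairwise (Disjoint on update (update M i A) j B) := by
  have hout : ∀ l, l ≠ i → l ≠ j → Disjoint (A ∪ B) (M l) := fun l hli hlj => by
    rw [hU]; exact disjoint_union_left.mpr ⟨hM hli.symm, hM hlj.symm⟩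
  intro l m hlm
  simp only [onFun, update_apply]
  split_ifs <;> subst_vars
  all_goals first
    | exact absurd rfl hlm | exact absurd rfl hij | exact hAB | exact hAB.symm
    | exact hM hlm
    | exact (hout _ ‹_› ‹_›).mono_left subset_union_left
    | exact (hout _ ‹_› ‹_›).mono_left subset_union_right
    | exact ((hout _ ‹_› ‹_›).mono_left subset_union_left).symm
    | exact ((hout _ ‹_› ‹_›).mono_left subset_union_right).symm

lemma Finset.biUnion_update_update [Fintype ι] (hij : i ≠ j) (hU : A ∪ B = M i ∪ M j) :
    univ.biUnion (update (update M i A) j B) = univ.biUnion M := by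
  rw [← union_compl {i, j}, union_biUnion, union_biUnion, biUnion_insert, biUnion_insert,
    singleton_biUnion, singleton_biUnion, update_self, update_of_ne hij, update_self, hU]
  congr 1
  refine biUnion_congr rfl fun l hl => ?_
  rw [mem_compl, mem_insert, mem_singleton, not_or] at hl
  rw [update_of_ne hl.2, update_of_ne hl.1]

end update

structure IsMatchingDecomposition {ι V : Type*} [Fintype ι] [DecidableEq V]
    (E : Finset (Sym2 V)) (M : ι → Finset (Sym2 V)) : Prop where
  isMatching : ∀ i, IsMatchingEdgeSet (M i)
  pairwise_disjoint : Pairwise (Disjoint on M)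
  biUnion_eq : univ.biUnion M = E

namespace IsMatchingDecomposition

variable {ι V : Type*} [Fintype ι] [DecidableEq ι] [DecidableEq V] [Finite V]
  {E : Finset (Sym2 V)} {M : ι → Finset (Sym2 V)}

lemma exists_sum_sq_lt (hM : IsMatchingDecomposition E M) {i j : ι}
    (hij : #(M j) + 2 ≤ #(M i)) :
    ∃ M' : ι → Finset (Sym2 V), IsMatchingDecomposition E M' ∧
      ∑ l, #(M' l) ^ 2 < ∑ l, #(M l) ^ 2 := by
  have hne : i ≠ j := by rintro rfl; omega
  obtain ⟨A, B, hA, hB, hAB, hU, hcardA, hcardB⟩ := (hM.isMatching i).exists_exchange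
    (hM.isMatching j) (hM.pairwise_disjoint hne) (by omega)
  refine ⟨update (update M i A) j B, ⟨fun l => ?_,
    pairwise_disjoint_update_update hM.pairwise_disjoint hne hAB hU,
    (biUnion_update_update hne hU).trans hM.biUnion_eq⟩, ?_⟩
  · simp only [update_apply]
    split_ifs
    exacts [hB, hA, hM.isMatching l]
  · have := sum_comp_update_update_add (fun s : Finset (Sym2 V) => #s ^ 2) M hne A B
    nlinarith

theorem exists_balanced (hM : IsMatchingDecomposition E M) :
    ∃ M' : ι → Finset (Sym2 V), IsMatchingDecomposition E M' ∧
      ∀ i j, #(M' i) ≤ #(M' j) + 1 := by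
  obtain ⟨M', hM', hmin⟩ := (measure fun N : ι → Finset (Sym2 V) => ∑ i, #(N i) ^ 2).wf.has_min
    {N | IsMatchingDecomposition E N} ⟨M, hM⟩
  refine ⟨M', hM', fun i j => ?_⟩
  by_contra! h
  obtain ⟨N, hN, hlt⟩ := hM'.exists_sum_sq_lt (i := i) (j := j) (by omega)
  exact hmin N hN hlt

end IsMatchingDecomposition

/-- Edge-disjoint matchings in a graph can be rebalanced into edge-disjoint matchings with
the same union whose sizes pairwise differ by at most one. -/
theorem balancing_matchings {V : Type*} [Fintype V] [DecidableEq V]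
    (G : SimpleGraph V) [DecidableRel G.Adj] (k : ℕ) (M : Fin k → Finset (Sym2 V))
    (hsub : ∀ i, M i ⊆ G.edgeFinset)
    (hmatch : ∀ i, IsMatchingEdgeSet (M i))
    (hdisj : ∀ i j, i ≠ j → Disjoint (M i) (M j)) :
    ∃ M' : Fin k → Finset (Sym2 V),
      (∀ i, M' i ⊆ G.edgeFinset) ∧
      (∀ i, IsMatchingEdgeSet (M' i)) ∧
      (∀ i j, i ≠ j → Disjoint (M' i) (M' j)) ∧
      Finset.univ.biUnion M' = Finset.univ.biUnion M ∧
      (∀ i j, (M' i).card ≤ (M' j).card + 1) := by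
  obtain ⟨M', hM', hbal⟩ :=
    (IsMatchingDecomposition.mk hmatch (fun i j => hdisj i j) rfl).exists_balanced
  refine ⟨M', fun i => ?_, hM'.isMatching, fun i j => @hM'.pairwise_disjoint i j,
    hM'.biUnion_eq, hbal⟩
  calc M' i ⊆ univ.biUnion M' := subset_biUnion_of_mem M' (mem_univ i)
    _ = univ.biUnion M := hM'.biUnion_eq
    _ ⊆ G.edgeFinset := biUnion_subset.mpr fun i _ => hsub i
end

section
/- Let $H$ be a bipartite graph with parts $X$ and $Y$ such that every vertex $x \in X$ has degree less than $d$. Then the edge set of $H$ can be decomposed into $d+1$ parts $\mathcal{F}_1, \ldots, \mathcal{F}_d, R$ such that the $\mathcal{F}_i$ are pairwise isomorphic star forests, each with at most $|Y|$ components, whose stars have size at most $\Delta(H)/d$, and $\Delta(R) < d$. -/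
/-!
Split the neighbourhood of every vertex `y` into `⌊deg y / d⌋` disjoint blocks of size `d`.
Only vertices of degree at least `d` have blocks; they lie in `Y`, so the blocks consist of
`X`-vertices, each lying in fewer than `d` blocks. After padding the block–vertex incidence graph
to a `d`-regular bipartite multigraph, Hall's theorem peels off `d` perfect matchings (König).
The `i`-th matching picks one leaf in every block, and the leaves picked in the blocks of `y`
form the star at `y` of the `i`-th forest. Every forest has `⌊deg y / d⌋` leaves at `y`, so the
forests are isomorphic and the remainder at `y` has `deg y mod d` edges.
-/

open Finset Function

section NatMatrix

variable {α β : Type*} [Fintype α] [Fintype β] [DecidableEq β]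

theorem exists_equiv_forall_pos_of_sum_eq {k : ℕ} (hk : 0 < k) (M : α → β → ℕ)
    (hrow : ∀ a, ∑ b, M a b = k) (hcol : ∀ b, ∑ a, M a b = k) :
    ∃ σ : α ≃ β, ∀ a, 0 < M a (σ a) := by
  let N a : Finset β := {b | 0 < M a b}
  have hall (A : Finset α) : #A ≤ #(A.biUnion N) := by
    have hsupp (a) (ha : a ∈ A) : ∑ b ∈ A.biUnion N, M a b = k := by
      rw [← hrow a]
      refine sum_subset (subset_univ _) fun b _ hb => ?_
      by_contra h
      exact hb (mem_biUnion.2 ⟨a, ha, by simp [N, Nat.pos_of_ne_zero h]⟩)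
    refine Nat.le_of_mul_le_mul_right ?_ hk
    calc #A * k = ∑ a ∈ A, ∑ b ∈ A.biUnion N, M a b := by simp [sum_congr rfl hsupp]
      _ ≤ ∑ a, ∑ b ∈ A.biUnion N, M a b := sum_le_sum_of_subset (subset_univ A)
      _ = #(A.biUnion N) * k := by simp [sum_comm (s := univ), hcol]
  obtain ⟨f, hf, hfN⟩ := (all_card_le_biUnion_card_iff_exists_injective N).1 hall
  have hcard : Fintype.card α = Fintype.card β := by
    refine Nat.eq_of_mul_eq_mul_right hk ?_
    calc Fintype.card α * k = ∑ a, ∑ b, M a b := by simp [hrow]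
      _ = Fintype.card β * k := by simp [sum_comm (s := univ), hcol]
  exact ⟨Equiv.ofBijective f ((Fintype.bijective_iff_injective_and_card f).2 ⟨hf, hcard⟩),
    fun a => by simpa [N] using hfN a⟩

theorem exists_equivs_of_sum_eq (k : ℕ) (M : α → β → ℕ)
    (hrow : ∀ a, ∑ b, M a b = k) (hcol : ∀ b, ∑ a, M a b = k) :
    ∃ c : Fin k → α ≃ β, ∀ a b, M a b = #{l | c l a = b} := by
  induction k generalizing M with
  | zero =>
    refine ⟨Fin.elim0, fun a b => ?_⟩
    simpa using (sum_eq_zero_iff.1 (hrow a)) b (mem_univ b)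
  | succ k ih =>
    obtain ⟨σ, hσ⟩ := exists_equiv_forall_pos_of_sum_eq k.succ_pos M hrow hcol
    let M' a b := M a b - if σ a = b then 1 else 0
    have hM a b : M a b = M' a b + if σ a = b then 1 else 0 := by
      by_cases h : σ a = b
      · subst h
        have := hσ a
        simp only [M', if_true]
        omega
      · simp [M', h]
    have hrow' a : ∑ b, M' a b = k := by
      have := hrow a
      simp only [hM, sum_add_distrib, sum_ite_eq, mem_univ, if_true] at this
      omega
    have hcol' b : ∑ a, M' a b = k := by
      have := hcol b
      simp only [hM, sum_add_distrib, σ.sum_comp fun b' => if b' = b then 1 else 0, sum_ite_eq',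
        mem_univ, if_true] at this
      omega
    obtain ⟨c, hc⟩ := ih M' hrow' hcol'
    refine ⟨Fin.cons σ c, fun a b => ?_⟩
    rw [hM, hc, card_filter, card_filter, Fin.sum_univ_succ, add_comm]
    simp

theorem exists_sum_eq_of_sum_eq (r : α → ℕ) (c : β → ℕ) (h : ∑ a, r a = ∑ b, c b) :
    ∃ N : α → β → ℕ, (∀ a, ∑ b, N a b = r a) ∧ ∀ b, ∑ a, N a b = c b := by
  have e : (Σ a, Fin (r a)) ≃ Σ b, Fin (c b) := Fintype.equivOfCardEq (by simpa using h)
  refine ⟨fun a b => #{u | (e ⟨a, u⟩).1 = b}, fun a => ?_, fun b => ?_⟩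
  · simp only [card_filter]
    rw [sum_comm]
    simp
  · simp only [card_filter]
    rw [← Fintype.sum_sigma (fun p => if (e p).1 = b then 1 else 0),
      e.sum_comp (fun q => if q.1 = b then 1 else 0), Fintype.sum_sigma]
    simp [apply_ite]

theorem exists_injective_of_sum_eq_of_sum_le {d : ℕ} (M : α → β → ℕ)
    (hrow : ∀ a, ∑ b, M a b = d) (hcol : ∀ b, ∑ a, M a b ≤ d) :
    ∃ f : Fin d → α → β, (∀ i, Injective (f i)) ∧
      ∀ a b, M a b = #{i | f i a = b} := by
  -- `p` extra rows absorb the column deficits `d - ∑ a, M a b`, making the matrix `d`-regular.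
  set p := Fintype.card β - Fintype.card α
  have hdeficit : ∑ _ : Fin p, d = ∑ b, (d - ∑ a, M a b) := by
    have htot : ∑ b, ∑ a, M a b = Fintype.card α * d := by simp [sum_comm (s := univ), hrow]
    have hsplit : ∑ b, (d - ∑ a, M a b) + ∑ b, ∑ a, M a b = Fintype.card β * d := by
      simp [← sum_add_distrib, Nat.sub_add_cancel (hcol _)]
    simp only [sum_const, card_univ, Fintype.card_fin, smul_eq_mul, p, Nat.sub_mul]
    omega
  obtain ⟨N, hNrow, hNcol⟩ := exists_sum_eq_of_sum_eq _ _ hdeficit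
  obtain ⟨c, hc⟩ := exists_equivs_of_sum_eq d (Sum.elim M N)
    (by simp [hrow, hNrow]) (fun b => by simp [Fintype.sum_sum_type, hNcol, hcol b])
  exact ⟨fun i a => c i (.inl a), fun i => (c i).injective.comp Sum.inl_injective,
    fun a b => hc (.inl a) b⟩

theorem exists_disjoint_transversals {ι : Type*} [Fintype ι] {d : ℕ} (B : ι → Finset β)
    (hB : ∀ a, #(B a) = d) (hdeg : ∀ b, #{a | b ∈ B a} ≤ d) :
    ∃ f : Fin d → ι → β, (∀ i, Injective (f i)) ∧ (∀ i a, f i a ∈ B a) ∧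
      ∀ a, Injective fun i => f i a := by
  obtain ⟨f, hf, hM⟩ :=
    exists_injective_of_sum_eq_of_sum_le (d := d) (fun a b => if b ∈ B a then 1 else 0)
    (fun a => by simp [hB]) (fun b => by simpa using hdeg b)
  refine ⟨f, hf, fun i a => ?_, fun a i i' h => ?_⟩
  · by_contra hnot
    have hcount := hM a (f i a)
    rw [if_neg hnot, eq_comm, card_eq_zero, filter_eq_empty_iff] at hcount
    exact hcount (mem_univ i) rfl
  · have hle : #{i' | f i' a = f i a} ≤ 1 := by
      rw [← hM]
      split_ifs <;> simp
    exact (card_le_one.1 hle i' (by simp [h]) i (by simp)).symm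
end NatMatrix

theorem Finset.exists_pairwise_disjoint_subsets_card_eq {α : Type*} [DecidableEq α]
    (s : Finset α) {k d : ℕ} (h : k * d ≤ #s) :
    ∃ B : Fin k → Finset α,
      (∀ j, B j ⊆ s) ∧ (∀ j, #(B j) = d) ∧ Pairwise (Disjoint on B) := by
  obtain ⟨e⟩ :=
    Function.Embedding.nonempty_of_card_le (α := Fin k × Fin d) (β := s) (by simpa using h)
  have he : Injective fun p => (e p : α) := Subtype.val_injective.comp e.injective
  refine ⟨fun j => univ.image fun l => (e (j, l) : α), fun j => ?_, fun j => ?_,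
    fun j j' hjj' => ?_⟩
  · simp [image_subset_iff]
  · exact (card_image_of_injective _ (he.comp (Prod.mk_right_injective j))).trans (by simp)
  · simp only [onFun, disjoint_left, mem_image, mem_univ, true_and]
    rintro _ ⟨l, rfl⟩ ⟨l', hl'⟩
    exact hjj' (congrArg Prod.fst (he hl')).symm

namespace SimpleGraph

variable {V : Type*} [Fintype V] {H : SimpleGraph V} [DecidableRel H.Adj] {d : ℕ}

def starEdges [DecidableEq V] (L : V → Finset V) : Finset (Sym2 V) :=
  univ.biUnion fun y => (L y).image fun x => s(y, x)

/-- `L i y` is the leaf set of the star centred at `y` in the `i`-th forest. -/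
structure IsEquitableStarFamily (H : SimpleGraph V) [DecidableRel H.Adj] (d : ℕ)
    (L : Fin d → V → Finset V) : Prop where
  adj : ∀ i y x, x ∈ L i y → H.Adj y x
  card_eq : ∀ i y, #(L i y) = H.degree y / d
  disjoint_of_ne_center : ∀ i y y', y ≠ y' → Disjoint (L i y) (L i y')
  disjoint_of_ne_forest : ∀ y i i', i ≠ i' → Disjoint (L i y) (L i' y)

theorem card_sigma_filter_mem_le [DecidableEq V]
    (hlight : ∀ y x, H.Adj y x → d ≤ H.degree y → H.degree x < d)
    {B : ∀ y, Fin (H.degree y / d) → Finset V} (hBsub : ∀ y j, B y j ⊆ H.neighborFinset y)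
    (hBdisj : ∀ y, Pairwise (Disjoint on B y)) (x : V) :
    #{a : Σ y, Fin (H.degree y / d) | x ∈ B a.1 a.2} ≤ d := by
  have hBadj {y j} (hx : x ∈ B y j) : H.Adj x y :=
    ((H.mem_neighborFinset y x).1 (hBsub y j hx)).symm
  rcases eq_empty_or_nonempty {a : Σ y, Fin (H.degree y / d) | x ∈ B a.1 a.2}
    with he | ⟨⟨y, j⟩, hyj⟩
  · simp [he]
  refine le_of_lt (lt_of_le_of_lt ?_ (hlight y x (hBadj (mem_filter.1 hyj).2).symm
    (Nat.div_pos_iff.1 (Fin.pos j)).2))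
  rw [← card_neighborFinset_eq_degree]
  refine card_le_card_of_injOn Sigma.fst (fun a ha => by simpa using hBadj (mem_filter.1 ha).2) ?_
  rintro ⟨y₁, j₁⟩ h₁ ⟨y₂, j₂⟩ h₂ (rfl : y₁ = y₂)
  simp only [coe_filter, mem_univ, true_and, Set.mem_ofPred_eq] at h₁ h₂
  obtain rfl : j₁ = j₂ :=
    by_contra fun hne => Finset.disjoint_left.1 (hBdisj y₁ hne) h₁ h₂
  rfl

theorem exists_isEquitableStarFamily [DecidableEq V]
    (hlight : ∀ y x, H.Adj y x → d ≤ H.degree y → H.degree x < d) :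
    ∃ L, IsEquitableStarFamily H d L := by
  have hblocks y := (H.neighborFinset y).exists_pairwise_disjoint_subsets_card_eq
    (k := H.degree y / d) (d := d) (by simpa using Nat.div_mul_le_self (H.degree y) d)
  choose B hBsub hBcard hBdisj using hblocks
  have hBadj {y j x} (hx : x ∈ B y j) : H.Adj y x := (H.mem_neighborFinset y x).1 (hBsub y j hx)
  obtain ⟨f, hf, hfB, hfinj⟩ := exists_disjoint_transversals
    (fun a : Σ y, Fin (H.degree y / d) => B a.1 a.2)
    (fun a => hBcard a.1 a.2) (card_sigma_filter_mem_le hlight hBsub hBdisj)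
  refine ⟨fun i y => univ.image fun j => f i ⟨y, j⟩, ⟨?_, ?_, ?_, ?_⟩⟩
  · simp only [mem_image, mem_univ, true_and]
    rintro i y _ ⟨j, rfl⟩
    exact hBadj (hfB i ⟨y, j⟩)
  · intro i y
    exact (card_image_of_injective _ ((hf i).comp sigma_mk_injective)).trans (by simp)
  · intro i y y' hne
    simp only [Finset.disjoint_left, mem_image, mem_univ, true_and]
    rintro _ ⟨j, rfl⟩ ⟨j', hj'⟩
    exact hne (congrArg Sigma.fst (hf i hj')).symm
  · intro y i i' hne
    simp only [Finset.disjoint_left, mem_image, mem_univ, true_and]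
    rintro _ ⟨j, rfl⟩ ⟨j', hj'⟩
    obtain rfl : j' = j := by
      by_contra hjj
      exact Finset.disjoint_left.1 (hBdisj y hjj) (hj' ▸ hfB i' ⟨y, j'⟩) (hfB i ⟨y, j⟩)
    exact hne (hfinj _ hj').symm

namespace IsEquitableStarFamily

variable {L : Fin d → V → Finset V}

theorem le_degree_of_nonempty (hL : IsEquitableStarFamily H d L) {i y} (h : (L i y).Nonempty) :
    d ≤ H.degree y :=
  (Nat.div_pos_iff.1 (hL.card_eq i y ▸ h.card_pos)).2

theorem degree_lt_of_mem (hL : IsEquitableStarFamily H d L)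
    (hlight : ∀ y x, H.Adj y x → d ≤ H.degree y → H.degree x < d) {i y x}
    (hx : x ∈ L i y) :
    H.degree x < d :=
  hlight y x (hL.adj i y x hx) (hL.le_degree_of_nonempty ⟨x, hx⟩)

theorem disjoint_insert [DecidableEq V] (hL : IsEquitableStarFamily H d L)
    (hlight : ∀ y x, H.Adj y x → d ≤ H.degree y → H.degree x < d) {i y y'} (hne : y ≠ y')
    (hy : (L i y).Nonempty) (hy' : (L i y').Nonempty) :
    Disjoint (insert y (L i y)) (insert y' (L i y')) := by
  have hnot {y₁ y₂} (h₁ : (L i y₁).Nonempty) : y₁ ∉ L i y₂ := fun h =>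
    (hL.degree_lt_of_mem hlight h).not_ge (hL.le_degree_of_nonempty h₁)
  simp only [disjoint_insert_left, disjoint_insert_right, mem_insert, not_or]
  exact ⟨⟨hne.symm, hnot hy'⟩, hnot hy, hL.disjoint_of_ne_center i y y' hne⟩

theorem starEdges_subset [DecidableEq V] (hL : IsEquitableStarFamily H d L) (i : Fin d) :
    starEdges (L i) ⊆ H.edgeFinset := by
  simp only [starEdges, biUnion_subset, image_subset_iff, mem_edgeFinset, mem_edgeSet]
  exact fun y _ x hx => hL.adj i y x hx

theorem disjoint_starEdges [DecidableEq V] (hL : IsEquitableStarFamily H d L)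
    (hlight : ∀ y x, H.Adj y x → d ≤ H.degree y → H.degree x < d) {i i'} (hne : i ≠ i') :
    Disjoint (starEdges (L i)) (starEdges (L i')) := by
  simp only [starEdges, Finset.disjoint_left, mem_biUnion, mem_image, mem_univ, true_and]
  rintro _ ⟨y, x, hx, rfl⟩ ⟨y', x', hx', he⟩
  rcases Sym2.eq_iff.1 he with ⟨rfl, rfl⟩ | ⟨rfl, rfl⟩
  · exact Finset.disjoint_left.1 (hL.disjoint_of_ne_forest y' i' i hne.symm) hx' hx
  · exact (hL.degree_lt_of_mem hlight hx').not_ge (hL.le_degree_of_nonempty ⟨_, hx⟩)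

theorem card_incident_sdiff_lt [DecidableEq V] (hL : IsEquitableStarFamily H d L) (hd : 0 < d)
    (v : V) :
    #{e ∈ H.edgeFinset \ univ.biUnion (fun i => starEdges (L i)) | v ∈ e} < d := by
  let S := univ.biUnion fun i => (L i v).image fun x => s(v, x)
  have hinj : Injective fun x => s(v, x) := (Sym2.mkEmbedding v).injective
  have hS : #S = d * (H.degree v / d) := by
    rw [card_biUnion fun i _ i' _ hne =>
      (disjoint_image hinj).2 (hL.disjoint_of_ne_forest v i i' hne)]
    simp [card_image_of_injective _ hinj, hL.card_eq]
  have hSsub : S ⊆ {e ∈ H.edgeFinset | v ∈ e} := by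
    simp only [S, biUnion_subset, image_subset_iff, mem_filter, mem_edgeFinset, mem_edgeSet]
    exact fun i _ x hx => ⟨hL.adj i v x hx, Sym2.mem_mk_left v x⟩
  have hSF : S ⊆ univ.biUnion fun i => starEdges (L i) :=
    biUnion_mono fun i _ => subset_biUnion_of_mem (fun y => (L i y).image fun x => s(y, x))
      (mem_univ v)
  have hsub : {e ∈ H.edgeFinset \ univ.biUnion (fun i => starEdges (L i)) | v ∈ e} ⊆
      {e ∈ H.edgeFinset | v ∈ e} \ S := by
    intro e
    simp only [mem_filter, mem_sdiff]
    exact fun ⟨⟨hE, hF⟩, hv⟩ => ⟨⟨hE, hv⟩, fun hS => hF (hSF hS)⟩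
  calc _ ≤ #({e ∈ H.edgeFinset | v ∈ e} \ S) := card_le_card hsub
    _ = H.degree v % d := by
      rw [card_sdiff_of_subset hSsub, hS, ← incidenceFinset_eq_filter,
        card_incidenceFinset_eq_degree]
      have := Nat.mod_add_div (H.degree v) d
      omega
    _ < d := Nat.mod_lt _ hd

end IsEquitableStarFamily

theorem mem_of_adj_of_le_degree {X Y : Finset V}
    (hbip : ∀ e ∈ H.edgeFinset, ∃ x ∈ X, ∃ y ∈ Y, e = s(x, y))
    (hdeg : ∀ x ∈ X, H.degree x < d) {x y : V} (hadj : H.Adj y x) (hy : d ≤ H.degree y) :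
    y ∈ Y ∧ x ∈ X := by
  obtain ⟨x', hx', y', hy', he⟩ := hbip s(y, x) (by simpa using hadj)
  rcases Sym2.eq_iff.1 he with ⟨rfl, rfl⟩ | ⟨rfl, rfl⟩
  · exact absurd (hdeg y hx') hy.not_gt
  · exact ⟨hy', hx'⟩

end SimpleGraph

theorem bipartite_star_forest_decomposition_general {V : Type*} [Fintype V] [DecidableEq V]
    (H : SimpleGraph V) [DecidableRel H.Adj] (X Y : Finset V) (d : ℕ) (hd : 0 < d)
    (hbip : ∀ e ∈ H.edgeFinset, ∃ x ∈ X, ∃ y ∈ Y, e = s(x, y))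
    (hdeg : ∀ x ∈ X, H.degree x < d) :
    ∃ (L : Fin d → V → Finset V) (R : Finset (Sym2 V)),
      -- each star is centred at a vertex of `Y` with leaves among its neighbours
      (∀ i y, (L i y).Nonempty → y ∈ Y) ∧
      (∀ i y x, x ∈ L i y → H.Adj y x) ∧
      -- the stars of one forest are pairwise vertex-disjoint
      (∀ i y y', y ≠ y' → (L i y).Nonempty → (L i y').Nonempty →
        Disjoint (insert y (L i y)) (insert y' (L i y'))) ∧
      -- at most |Y| components
      (∀ i, (Finset.univ.filter fun y => (L i y).Nonempty).card ≤ Y.card) ∧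
      -- stars have size at most Δ(H)/d
      (∀ i y, (L i y).card * d ≤ H.maxDegree) ∧
      -- the star forests are pairwise isomorphic: same multiset of (nonzero) star sizes
      (∀ i j, ((Finset.univ.val.map fun y => (L i y).card).filter (· ≠ 0))
            = ((Finset.univ.val.map fun y => (L j y).card).filter (· ≠ 0))) ∧
      -- the star forests together with R decompose the edges of H
      (∀ i j, i ≠ j →
        Disjoint (Finset.univ.biUnion fun y => (L i y).image fun x => s(y, x))
                 (Finset.univ.biUnion fun y => (L j y).image fun x => s(y, x))) ∧
      (∀ i, Disjoint (Finset.univ.biUnion fun y => (L i y).image fun x => s(y, x)) R) ∧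
      (Finset.univ.biUnion
          (fun i : Fin d => Finset.univ.biUnion fun y => (L i y).image fun x => s(y, x))
        ∪ R = H.edgeFinset) ∧
      -- the remainder has maximum degree less than d
      (∀ v : V, (R.filter fun e => v ∈ e).card < d) := by
  have hbipartite {y x} (hadj : H.Adj y x) (hy : d ≤ H.degree y) : y ∈ Y ∧ x ∈ X :=
    H.mem_of_adj_of_le_degree hbip hdeg hadj hy
  have hlight y x (hadj : H.Adj y x) (hy : d ≤ H.degree y) : H.degree x < d :=
    hdeg x (hbipartite hadj hy).2
  obtain ⟨L, hL⟩ := SimpleGraph.exists_isEquitableStarFamily hlight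
  have hY i y (hy : (L i y).Nonempty) : y ∈ Y :=
    (hbipartite (hL.adj i y _ hy.choose_spec) (hL.le_degree_of_nonempty hy)).1
  refine ⟨L, H.edgeFinset \ univ.biUnion fun i => SimpleGraph.starEdges (L i), hY, hL.adj,
    fun i y y' => hL.disjoint_insert hlight,
    fun i => card_le_card fun y hy => hY i y (mem_filter.1 hy).2,
    fun i y => hL.card_eq i y ▸ (Nat.div_mul_le_self _ _).trans (H.degree_le_maxDegree y),
    fun i j => by simp only [hL.card_eq], fun i j => hL.disjoint_starEdges hlight,
    fun i => disjoint_sdiff.mono_left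
      (subset_biUnion_of_mem (SimpleGraph.starEdges <| L ·) (mem_univ i)),
    union_sdiff_of_subset (biUnion_subset.2 fun i _ => hL.starEdges_subset i),
    hL.card_incident_sdiff_lt hd⟩

/-- Decomposition of a bipartite graph, all of whose `X`-side degrees are less than `d`,
into `d` pairwise isomorphic star forests (each star forest recorded by its leaf sets
`L i y` around centres `y ∈ Y`, with at most `|Y|` components and stars of size at most
`Δ(H)/d`) together with a remainder of maximum degree less than `d`. -/
theorem bipartite_star_forest_decomposition {V : Type*} [Fintype V] [DecidableEq V]
    (H : SimpleGraph V) [DecidableRel H.Adj] (X Y : Finset V) (d : ℕ) (hd : 0 < d)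
    (hXY : Disjoint X Y)
    (hbip : ∀ e ∈ H.edgeFinset, ∃ x ∈ X, ∃ y ∈ Y, e = s(x, y))
    (hdeg : ∀ x ∈ X, H.degree x < d) :
    ∃ (L : Fin d → V → Finset V) (R : Finset (Sym2 V)),
      -- each star is centred at a vertex of `Y` with leaves among its neighbours
      (∀ i y, (L i y).Nonempty → y ∈ Y) ∧
      (∀ i y x, x ∈ L i y → H.Adj y x) ∧
      -- the stars of one forest are pairwise vertex-disjoint
      (∀ i y y', y ≠ y' → (L i y).Nonempty → (L i y').Nonempty →
        Disjoint (insert y (L i y)) (insert y' (L i y'))) ∧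
      -- at most |Y| components
      (∀ i, (Finset.univ.filter fun y => (L i y).Nonempty).card ≤ Y.card) ∧
      -- stars have size at most Δ(H)/d
      (∀ i y, (L i y).card * d ≤ H.maxDegree) ∧
      -- the star forests are pairwise isomorphic: same multiset of (nonzero) star sizes
      (∀ i j, ((Finset.univ.val.map fun y => (L i y).card).filter (· ≠ 0))
            = ((Finset.univ.val.map fun y => (L j y).card).filter (· ≠ 0))) ∧
      -- the star forests together with R decompose the edges of H
      (∀ i j, i ≠ j →
        Disjoint (Finset.univ.biUnion fun y => (L i y).image fun x => s(y, x))
                 (Finset.univ.biUnion fun y => (L j y).image fun x => s(y, x))) ∧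
      (∀ i, Disjoint (Finset.univ.biUnion fun y => (L i y).image fun x => s(y, x)) R) ∧
      (Finset.univ.biUnion
          (fun i : Fin d => Finset.univ.biUnion fun y => (L i y).image fun x => s(y, x))
        ∪ R = H.edgeFinset) ∧
      -- the remainder has maximum degree less than d
      (∀ v : V, (R.filter fun e => v ∈ e).card < d) :=
  bipartite_star_forest_decomposition_general H X Y d hd hbip hdeg
end

section
/- Let $H$ be a graph that is $4$-divisible, let $S$ be a star with an even number of edges, and let $G$ be the edge-disjoint union of $H$ and $S$. Then $G$ has an edge decomposition $(H_1, H_2, H_3, H_4, S_1, S_2, S_3, S_4)$ such that each $H_i$ is isomorphic to $H/4$, each $S_i$ is a star with $e(S_1) = e(S)/2$, and $H_i$ and $S_i$ are vertex-disjoint for every $i \in \{1,2,3,4\}$. -/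
/-!
Colour the vertices of `H` by `χ : V → Fin 4`, constantly on components, so that the four colour
classes induce isomorphic graphs: distribute the components of every isomorphism class (whose size
is divisible by 4) evenly over the colours, and glue componentwise isomorphisms into an
automorphism of `H` that raises every colour by one. Relabel the colours so that the centre `c` of
the star gets colour `3` and at most half of the edges of the star have a leaf of colour `0`; one
of the colours `χ c + 1`, `χ c + 2` qualifies, since no edge has leaves of both. Then colour the
edges of the star so that no edge touches a vertex of its own colour: `⌊e(S)/2⌋` edges avoiding
colour `0` get colour `0`, the others colour `2` if their leaf has colour `1` and `1` otherwise.
-/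

/-- Two edge-pieces (graphs on possibly different vertex sets) are isomorphic if the induced
graphs on their supports (vertices incident to an edge) are isomorphic. -/
def IsoPieces {V W : Type} (A : SimpleGraph V) (B : SimpleGraph W) : Prop :=
  Nonempty ((A.induce A.support) ≃g (B.induce B.support))

/-- The number of connected components of `G` whose induced graph is isomorphic to that
of the component `c`. -/
noncomputable def isoClassCount {V : Type} (G : SimpleGraph V) (c : G.ConnectedComponent) : ℕ :=
  Nat.card {c' : G.ConnectedComponent //
    Nonempty ((G.induce c'.supp) ≃g (G.induce c.supp))}

/-- A graph is `r`-divisible if each isomorphism class of its connected components has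
size divisible by `r`. -/
def GraphDivisible {V : Type} (r : ℕ) (G : SimpleGraph V) : Prop :=
  ∀ c : G.ConnectedComponent, r ∣ isoClassCount G c

theorem exists_perm_shift_of_dvd_card_fiber {α β : Type*} [Finite α] (g : α → β) (n : ℕ)
    [NeZero n] (hg : ∀ b, n ∣ Nat.card {a // g a = b}) :
    ∃ (f : α → Fin n) (ρ : Equiv.Perm α), ∀ a, g (ρ a) = g a ∧ f (ρ a) = f a + 1 := by
  let k b := Nat.card {a // g a = b} / n
  let e b : {a // g a = b} ≃ Fin (k b) × Fin n := (Finite.equivFin _).trans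
    ((finCongr (Nat.div_mul_cancel (hg b)).symm).trans finProdFinEquiv.symm)
  let E : α ≃ Σ b, Fin (k b) × Fin n :=
    (Equiv.sigmaFiberEquiv g).symm.trans (Equiv.sigmaCongrRight e)
  let shift : Equiv.Perm (Σ b, Fin (k b) × Fin n) :=
    Equiv.sigmaCongrRight fun _ => Equiv.prodCongr (Equiv.refl _) (Equiv.addRight 1)
  refine ⟨fun a => (E a).2.2, E.symm.permCongr shift, fun a => ?_⟩
  have hE : E (E.symm.permCongr shift a) = shift (E a) := by simp [Equiv.permCongr_apply]
  exact ⟨congrArg Sigma.fst hE, congrArg (fun x => x.2.2) hE⟩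

theorem Equiv.Perm.exists_apply_eq_and_apply_eq {α : Type*} [DecidableEq α] {a b x y : α}
    (hab : a ≠ b) (hxy : x ≠ y) : ∃ π : Equiv.Perm α, π a = x ∧ π b = y := by
  have hxb : x ≠ Equiv.swap a x b := fun h =>
    hab ((Equiv.swap a x).injective ((Equiv.swap_apply_left a x).trans h))
  exact ⟨(Equiv.swap a x).trans (Equiv.swap (Equiv.swap a x b) y),
    by simp [Equiv.swap_apply_of_ne_of_ne hxb hxy], by simp⟩

theorem Sym2.eq_of_mem_of_ne {α : Type*} {a u v : α} {z : Sym2 α} (ha : a ∈ z) (hu : u ∈ z)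
    (hv : v ∈ z) (hua : u ≠ a) (hva : v ≠ a) : u = v := by
  obtain ⟨w, rfl⟩ := Sym2.mem_iff_exists.mp ha
  rw [Sym2.mem_iff] at hu hv
  grind

namespace SimpleGraph

section Maps

variable {V W : Type*} {G : SimpleGraph V} {G' : SimpleGraph W}

theorem exists_iso_of_connectedComponent_isos (σ : G.ConnectedComponent ≃ G'.ConnectedComponent)
    (θ : ∀ C, G.induce C.supp ≃g G'.induce (σ C).supp) :
    ∃ φ : G ≃g G', ∀ x, G'.connectedComponentMk (φ x) = σ (G.connectedComponentMk x) := by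
  let Φ : V ≃ W := (Equiv.sigmaFiberEquiv G.connectedComponentMk).symm.trans
    ((Equiv.sigmaCongr σ fun C => (θ C).toEquiv).trans
      (Equiv.sigmaFiberEquiv G'.connectedComponentMk))
  have hΦ : ∀ C x (hx : G.connectedComponentMk x = C), Φ x = θ C ⟨x, hx⟩ := by
    rintro C x rfl; rfl
  have hcc : ∀ x, G'.connectedComponentMk (Φ x) = σ (G.connectedComponentMk x) :=
    fun x => (hΦ _ x rfl ▸ (θ _ ⟨x, rfl⟩).2 :)
  refine ⟨⟨Φ, fun {x y} => ?_⟩, hcc⟩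
  by_cases hxy : G.connectedComponentMk x = G.connectedComponentMk y
  · rw [hΦ _ x rfl, hΦ _ y hxy.symm]
    exact (θ _).map_adj_iff
  · refine iff_of_false (fun h => hxy (σ.injective ?_)) fun h => hxy ?_
    · rw [← hcc, ← hcc]
      exact ConnectedComponent.connectedComponentMk_eq_of_adj h
    · exact ConnectedComponent.connectedComponentMk_eq_of_adj h

def Iso.induceOfMemIff (φ : G ≃g G') {s : Set V} {t : Set W} (h : ∀ x, φ x ∈ t ↔ x ∈ s) :
    G.induce s ≃g G'.induce t :=
  ⟨φ.toEquiv.subtypeEquiv fun x => (h x).symm, φ.map_adj_iff⟩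

def induceInduceIso (G : SimpleGraph V) (s t : Set V) :
    (G.induce s).induce (Subtype.val ⁻¹' t) ≃g G.induce (s ∩ t) :=
  ⟨Equiv.subtypeSubtypeEquivSubtypeInter (· ∈ s) (· ∈ t), Iff.rfl⟩

end Maps

section Parts

variable {V : Type*} {G : SimpleGraph V} {s t : Set V}

theorem spanningCoe_induce_adj {u v : V} :
    (G.induce s).spanningCoe.Adj u v ↔ G.Adj u v ∧ u ∈ s ∧ v ∈ s := by
  simp

theorem mem_edgeSet_spanningCoe_induce {e : Sym2 V} :
    e ∈ (G.induce s).spanningCoe.edgeSet ↔ e ∈ G.edgeSet ∧ ∀ v ∈ e, v ∈ s := by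
  induction e using Sym2.ind with
  | _ u v => simp

theorem support_spanningCoe_induce (hs : ∀ ⦃u v⦄, G.Adj u v → u ∈ s → v ∈ s) :
    (G.induce s).spanningCoe.support = G.support ∩ s := by
  ext u
  simp only [mem_support, spanningCoe_induce_adj, Set.mem_inter_iff]
  exact ⟨fun ⟨v, huv, hu, _⟩ => ⟨⟨v, huv⟩, hu⟩, fun ⟨⟨v, huv⟩, hu⟩ => ⟨v, huv, hu, hs huv hu⟩⟩

theorem induce_spanningCoe_induce_of_subset (hst : s ⊆ t) :
    (G.induce t).spanningCoe.induce s = G.induce s := by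
  ext u v
  simp [hst u.2, hst v.2]

theorem edgeSet_fromEdgeSet_inter (G : SimpleGraph V) (t : Set (Sym2 V)) :
    (fromEdgeSet (G.edgeSet ∩ t)).edgeSet = G.edgeSet ∩ t := by
  ext e
  simp +contextual [edgeSet_fromEdgeSet, G.not_isDiag_of_mem_edgeSet]

theorem support_spanningCoe_induce_subset : (G.induce s).spanningCoe.support ⊆ s :=
  fun _ ⟨_, huv⟩ => (spanningCoe_induce_adj.mp huv).2.1

theorem disjoint_support_fromEdgeSet {E : Set (Sym2 V)} {U : Set V}
    (h : ∀ e ∈ E, ∀ v ∈ e, v ∉ U) : Disjoint (fromEdgeSet E).support U :=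
  Set.disjoint_left.mpr fun _ ⟨w, hw⟩ =>
    h _ ((fromEdgeSet_adj _).mp hw).1 _ (Sym2.mem_mk_left _ w)

theorem disjoint_edgeSet_fromEdgeSet_inter_preimage {ι : Type*} (κ : Sym2 V → ι) {i j : ι}
    (hij : i ≠ j) : Disjoint (fromEdgeSet (G.edgeSet ∩ κ ⁻¹' {i})).edgeSet
      (fromEdgeSet (G.edgeSet ∩ κ ⁻¹' {j})).edgeSet := by
  rw [edgeSet_fromEdgeSet_inter, edgeSet_fromEdgeSet_inter]
  exact ((Set.disjoint_singleton.mpr hij).preimage κ).mono Set.inter_subset_right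
    Set.inter_subset_right

theorem iUnion_edgeSet_fromEdgeSet_inter_preimage {ι : Type*} (κ : Sym2 V → ι) :
    ⋃ i, (fromEdgeSet (G.edgeSet ∩ κ ⁻¹' {i})).edgeSet = G.edgeSet := by
  simp_rw [edgeSet_fromEdgeSet_inter]
  ext e
  simp

end Parts

section Coloring

variable {V ι : Type*} {H : SimpleGraph V} {χ : V → ι}

structure IsIsoColoring (H : SimpleGraph V) (χ : V → ι) : Prop where
  eq_of_adj : ∀ ⦃x y⦄, H.Adj x y → χ x = χ y
  iso : ∀ i j, Nonempty (H.induce (H.support ∩ χ ⁻¹' {i}) ≃g H.induce (H.support ∩ χ ⁻¹' {j}))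

theorem IsIsoColoring.comp_perm (hχ : IsIsoColoring H χ) (π : Equiv.Perm ι) :
    IsIsoColoring H (π ∘ χ) := by
  have hpre : ∀ i, (π ∘ χ) ⁻¹' {i} = χ ⁻¹' {π.symm i} := fun i => by
    ext v; simp [Equiv.eq_symm_apply]
  exact ⟨fun x y h => congrArg π (hχ.eq_of_adj h), fun i j => by
    rw [hpre, hpre]; exact hχ.iso (π.symm i) (π.symm j)⟩

theorem IsIsoColoring.support_eq (hχ : IsIsoColoring H χ) (i : ι) :
    (H.induce (χ ⁻¹' {i})).spanningCoe.support = H.support ∩ χ ⁻¹' {i} :=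
  support_spanningCoe_induce fun _ _ huv hu => (hχ.eq_of_adj huv).symm.trans hu

theorem disjoint_edgeSet_spanningCoe_induce_preimage {i j : ι} (hij : i ≠ j) :
    Disjoint (H.induce (χ ⁻¹' {i})).spanningCoe.edgeSet
      (H.induce (χ ⁻¹' {j})).spanningCoe.edgeSet := by
  refine Set.disjoint_left.mpr fun e hi hj => hij ?_
  rw [mem_edgeSet_spanningCoe_induce] at hi hj
  exact (hi.2 _ e.out_fst_mem).symm.trans (hj.2 _ e.out_fst_mem)

theorem IsIsoColoring.iUnion_edgeSet (hχ : IsIsoColoring H χ) :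
    ⋃ i, (H.induce (χ ⁻¹' {i})).spanningCoe.edgeSet = H.edgeSet := by
  refine Set.Subset.antisymm (Set.iUnion_subset fun i e he =>
    (mem_edgeSet_spanningCoe_induce.mp he).1) fun e he => ?_
  induction e using Sym2.ind with
  | _ u v =>
    refine Set.mem_iUnion.mpr ⟨χ u, mem_edgeSet_spanningCoe_induce.mpr ⟨he, ?_⟩⟩
    simpa [Sym2.forall_mem_pair] using (hχ.eq_of_adj he).symm

end Coloring

section Divisible

variable {V : Type} {G H : SimpleGraph V}

theorem IsIsoColoring.isoPieces {ι : Type*} {χ : V → ι} (hχ : IsIsoColoring H χ) (i j : ι) :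
    IsoPieces (H.induce (χ ⁻¹' {i})).spanningCoe (H.induce (χ ⁻¹' {j})).spanningCoe := by
  rw [IsoPieces, hχ.support_eq, hχ.support_eq,
    induce_spanningCoe_induce_of_subset Set.inter_subset_right,
    induce_spanningCoe_induce_of_subset Set.inter_subset_right]
  exact hχ.iso i j

def componentIsoSetoid (G : SimpleGraph V) : Setoid G.ConnectedComponent where
  r C D := Nonempty (G.induce C.supp ≃g G.induce D.supp)
  iseqv := ⟨fun _ => ⟨Iso.refl⟩, fun ⟨e⟩ => ⟨e.symm⟩, fun ⟨e⟩ ⟨f⟩ => ⟨e.trans f⟩⟩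

open Fin.NatCast in
theorem _root_.GraphDivisible.exists_coloring [Finite V] {n : ℕ} [NeZero n]
    (h : GraphDivisible n G) :
    ∃ χ : V → Fin n, (∀ x y, G.Adj x y → χ x = χ y) ∧
      ∀ i j, Nonempty (G.induce (χ ⁻¹' {i}) ≃g G.induce (χ ⁻¹' {j})) := by
  have hfiber : ∀ q : Quotient (componentIsoSetoid G),
      n ∣ Nat.card {C // Quotient.mk _ C = q} := by
    intro q
    induction q using Quotient.inductionOn with
    | h C =>
      rw [Nat.card_congr (Equiv.subtypeEquivRight fun D => Quotient.eq)]
      exact h C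
  obtain ⟨f, ρ, hρ⟩ := exists_perm_shift_of_dvd_card_fiber _ n hfiber
  obtain ⟨φ, hφ⟩ := exists_iso_of_connectedComponent_isos ρ
    fun C => (Quotient.exact (hρ C).1 : Nonempty _).some.symm
  set χ : V → Fin n := fun x => f (G.connectedComponentMk x)
  have step : ∀ i, Nonempty (G.induce (χ ⁻¹' {i}) ≃g G.induce (χ ⁻¹' {i + 1})) := fun i =>
    ⟨φ.induceOfMemIff fun x => by simp [χ, hφ, (hρ _).2]⟩
  have chain : ∀ (k : ℕ) i, Nonempty (G.induce (χ ⁻¹' {i}) ≃g G.induce (χ ⁻¹' {i + k})) := by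
    intro k
    induction k with
    | zero => exact fun i => by rw [Nat.cast_zero, add_zero]; exact ⟨Iso.refl⟩
    | succ k ih =>
      intro i
      obtain ⟨e⟩ := ih i
      obtain ⟨e'⟩ := step (i + k)
      rw [Nat.cast_succ, ← add_assoc]
      exact ⟨e.trans e'⟩
  refine ⟨χ, fun x y hxy => congrArg f (ConnectedComponent.connectedComponentMk_eq_of_adj hxy),
    fun i j => ?_⟩
  have hji : ((j - i).val : Fin n) = j - i := Fin.ext (Fin.val_cast_of_lt (j - i).isLt)
  have := chain (j - i).val i
  rwa [hji, add_sub_cancel] at this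

theorem _root_.GraphDivisible.exists_isIsoColoring [Finite V] {n : ℕ} [NeZero n]
    (h : GraphDivisible n (H.induce H.support)) : ∃ χ : V → Fin n, IsIsoColoring H χ := by
  obtain ⟨χ, hadj, hiso⟩ := h.exists_coloring
  let χ' : V → Fin n := Function.extend Subtype.val χ fun _ => 0
  have hχ' : ∀ w : H.support, χ' w = χ w := Subtype.val_injective.extend_apply _ _
  have hpre : ∀ i, χ ⁻¹' {i} = Subtype.val ⁻¹' (χ' ⁻¹' {i}) := fun i => by
    ext w; simp [hχ']
  refine ⟨χ', fun x y hxy => ?_, fun i j => ?_⟩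
  · have hx : x ∈ H.support := ⟨y, hxy⟩
    have hy : y ∈ H.support := ⟨x, hxy.symm⟩
    exact (hχ' ⟨x, hx⟩).trans ((hadj ⟨x, hx⟩ ⟨y, hy⟩ hxy).trans (hχ' ⟨y, hy⟩).symm)
  · obtain ⟨e⟩ := hiso i j
    rw [hpre, hpre] at e
    exact ⟨(induceInduceIso H _ _).symm.trans (e.trans (induceInduceIso H _ _))⟩

end Divisible

section Star

variable {V : Type*} {S : SimpleGraph V} {c : V}

def edgesMeeting (G : SimpleGraph V) (U : Set V) : Set (Sym2 V) :=
  {e ∈ G.edgeSet | ∃ v ∈ e, v ∈ U}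

theorem disjoint_edgesMeeting (hc : ∀ e ∈ S.edgeSet, c ∈ e) {A B : Set V}
    (hAB : Disjoint A B) (hcA : c ∉ A) (hcB : c ∉ B) :
    Disjoint (S.edgesMeeting A) (S.edgesMeeting B) := by
  refine Set.disjoint_left.mpr fun e ⟨he, u, hu, huA⟩ ⟨_, v, hv, hvB⟩ => ?_
  have huv := Sym2.eq_of_mem_of_ne (hc e he) hu hv (ne_of_mem_of_not_mem huA hcA)
    (ne_of_mem_of_not_mem hvB hcB)
  exact Set.disjoint_left.mp hAB huA (huv ▸ hvB)

theorem exists_ne_ncard_edgesMeeting_le [Finite V] (hc : ∀ e ∈ S.edgeSet, c ∈ e)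
    (χ : V → Fin 4) :
    ∃ t ≠ χ c, (S.edgesMeeting (χ ⁻¹' {t})).ncard ≤ S.edgeSet.ncard / 2 := by
  have hne : ∀ d : Fin 4, d + 1 ≠ d ∧ d + 2 ≠ d ∧ d + 1 ≠ d + 2 := by decide
  obtain ⟨h1, h2, h12⟩ := hne (χ c)
  have hsum : (S.edgesMeeting (χ ⁻¹' {χ c + 1})).ncard +
      (S.edgesMeeting (χ ⁻¹' {χ c + 2})).ncard ≤ S.edgeSet.ncard := by
    rw [← Set.ncard_union_eq (disjoint_edgesMeeting hc
      ((Set.disjoint_singleton.mpr h12).preimage χ) h1.symm h2.symm)]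
    exact Set.ncard_le_ncard (Set.union_subset (Set.sep_subset _ _) (Set.sep_subset _ _))
  by_cases h : (S.edgesMeeting (χ ⁻¹' {χ c + 1})).ncard ≤ S.edgeSet.ncard / 2
  · exact ⟨_, h1, h⟩
  · exact ⟨_, h2, by omega⟩

theorem exists_edge_coloring_avoiding [Finite V] (hc : ∀ e ∈ S.edgeSet, c ∈ e)
    (χ : V → Fin 4) (hχc : χ c = 3)
    (hχ0 : (S.edgesMeeting (χ ⁻¹' {0})).ncard ≤ S.edgeSet.ncard / 2) :
    ∃ κ : Sym2 V → Fin 4, (∀ e ∈ S.edgeSet, ∀ v ∈ e, χ v ≠ κ e) ∧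
      (S.edgeSet ∩ κ ⁻¹' {0}).ncard = S.edgeSet.ncard / 2 := by
  classical
  obtain ⟨E₀, hE₀, hE₀card⟩ := Set.exists_subset_card_eq
    (s := S.edgeSet \ S.edgesMeeting (χ ⁻¹' {0})) (n := S.edgeSet.ncard / 2)
    (by have := Set.le_ncard_sdiff (S.edgesMeeting (χ ⁻¹' {0})) S.edgeSet; omega)
  let κ : Sym2 V → Fin 4 := fun e => if e ∈ E₀ then 0 else if ∃ v ∈ e, χ v = 1 then 2 else 1
  have hκ0 : κ ⁻¹' {0} = E₀ := by
    ext e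
    simp only [κ, Set.mem_preimage, Set.mem_singleton_iff]
    split_ifs <;> simp [*]
  refine ⟨κ, fun e he v hv => ?_, by
    rw [hκ0, Set.inter_eq_right.mpr fun e h => (hE₀ h).1, hE₀card]⟩
  simp only [κ]
  split_ifs with h0 h1
  · exact fun hv0 => (hE₀ h0).2 ⟨he, v, hv, hv0⟩
  · obtain ⟨u, hu, hu1⟩ := h1
    by_cases hvc : v = c
    · simp [hvc, hχc]
    · rw [Sym2.eq_of_mem_of_ne (hc e he) hv hu hvc (by rintro rfl; simp [hχc] at hu1), hu1]
      decide
  · exact fun hv1 => h1 ⟨v, hv, hv1⟩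

end Star

theorem _root_.GraphDivisible.exists_isIsoColoring_adapted_to_star {V : Type} [Finite V]
    {H S : SimpleGraph V} {c : V} (hdiv : GraphDivisible 4 (H.induce H.support))
    (hc : ∀ e ∈ S.edgeSet, c ∈ e) :
    ∃ χ : V → Fin 4, IsIsoColoring H χ ∧ χ c = 3 ∧
      (S.edgesMeeting (χ ⁻¹' {0})).ncard ≤ S.edgeSet.ncard / 2 := by
  obtain ⟨χ, hχ⟩ := hdiv.exists_isIsoColoring
  obtain ⟨t, htc, ht⟩ := exists_ne_ncard_edgesMeeting_le hc χ
  obtain ⟨π, hπt, hπc⟩ :=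
    Equiv.Perm.exists_apply_eq_and_apply_eq htc (by decide : (0 : Fin 4) ≠ 3)
  refine ⟨π ∘ χ, hχ.comp_perm π, hπc, ?_⟩
  have : (π ∘ χ) ⁻¹' {0} = χ ⁻¹' {t} := by
    ext v; simp [← hπt]
  rwa [this]

end SimpleGraph

open SimpleGraph

theorem combine_star_with_divisible_general {V : Type} [Fintype V]
    (H S : SimpleGraph V)
    (hdiv : GraphDivisible 4 (SimpleGraph.induce H.support H))
    (hstar : ∃ c : V, ∀ e ∈ S.edgeSet, c ∈ e) :
    ∃ Hs Ss : Fin 4 → SimpleGraph V,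
      -- the quarters of H: vertex-disjoint, pairwise isomorphic, decomposing H
      (∀ i j, i ≠ j → Disjoint (Hs i).support (Hs j).support) ∧
      (∀ i j, IsoPieces (Hs i) (Hs j)) ∧
      (∀ i j, i ≠ j → Disjoint (Hs i).edgeSet (Hs j).edgeSet) ∧
      (⋃ i, (Hs i).edgeSet) = H.edgeSet ∧
      -- the stars, decomposing S, with e(S₁) = e(S)/2
      (∀ i, ∃ c : V, ∀ e ∈ (Ss i).edgeSet, c ∈ e) ∧
      (∀ i j, i ≠ j → Disjoint (Ss i).edgeSet (Ss j).edgeSet) ∧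
      (⋃ i, (Ss i).edgeSet) = S.edgeSet ∧
      (Ss 0).edgeSet.ncard = S.edgeSet.ncard / 2 ∧
      -- Hᵢ and Sᵢ are vertex-disjoint
      (∀ i, Disjoint (Hs i).support (Ss i).support) := by
  obtain ⟨c, hc⟩ := hstar
  obtain ⟨χ, hχ, hχc, hχ0⟩ := hdiv.exists_isIsoColoring_adapted_to_star hc
  obtain ⟨κ, hκ, hκ0⟩ := exists_edge_coloring_avoiding hc χ hχc hχ0
  refine ⟨fun i => (H.induce (χ ⁻¹' {i})).spanningCoe,
    fun i => fromEdgeSet (S.edgeSet ∩ κ ⁻¹' {i}),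
    fun i j hij => ((Set.disjoint_singleton.mpr hij).preimage χ).mono
      support_spanningCoe_induce_subset support_spanningCoe_induce_subset,
    hχ.isoPieces, fun i j => disjoint_edgeSet_spanningCoe_induce_preimage, hχ.iUnion_edgeSet,
    fun i => ⟨c, fun e he => hc e ((edgeSet_fromEdgeSet_inter S _).subset he).1⟩,
    fun i j => disjoint_edgeSet_fromEdgeSet_inter_preimage κ,
    iUnion_edgeSet_fromEdgeSet_inter_preimage κ, by rwa [edgeSet_fromEdgeSet_inter],
    fun i => ?_⟩
  refine (disjoint_support_fromEdgeSet fun e he v hv hvi => ?_).symm.mono_left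
    support_spanningCoe_induce_subset
  exact hκ e he.1 v hv (hvi.trans he.2.symm)

/-- Combining a 4-divisible graph with an even star: if `G` is the edge-disjoint union of a
4-divisible graph `H` and a star `S` of even size, then `G` decomposes into
`H₁, …, H₄, S₁, …, S₄` where the `Hᵢ` are pairwise isomorphic vertex-disjoint quarters of `H`
(i.e. copies of `H/4`), the `Sᵢ` are stars with `e(S₁) = e(S)/2`, and `Hᵢ` and `Sᵢ` are
vertex-disjoint for each `i`. -/
theorem combine_star_with_divisible {V : Type} [Fintype V]
    (G H S : SimpleGraph V)
    (hedisj : Disjoint H.edgeSet S.edgeSet)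
    (hunion : G.edgeSet = H.edgeSet ∪ S.edgeSet)
    (hdiv : GraphDivisible 4 (SimpleGraph.induce H.support H))
    (hstar : ∃ c : V, ∀ e ∈ S.edgeSet, c ∈ e)
    (heven : Even S.edgeSet.ncard) :
    ∃ Hs Ss : Fin 4 → SimpleGraph V,
      -- the quarters of H: vertex-disjoint, pairwise isomorphic, decomposing H
      (∀ i j, i ≠ j → Disjoint (Hs i).support (Hs j).support) ∧
      (∀ i j, IsoPieces (Hs i) (Hs j)) ∧
      (∀ i j, i ≠ j → Disjoint (Hs i).edgeSet (Hs j).edgeSet) ∧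
      (⋃ i, (Hs i).edgeSet) = H.edgeSet ∧
      -- the stars, decomposing S, with e(S₁) = e(S)/2
      (∀ i, ∃ c : V, ∀ e ∈ (Ss i).edgeSet, c ∈ e) ∧
      (∀ i j, i ≠ j → Disjoint (Ss i).edgeSet (Ss j).edgeSet) ∧
      (⋃ i, (Ss i).edgeSet) = S.edgeSet ∧
      (Ss 0).edgeSet.ncard = S.edgeSet.ncard / 2 ∧
      -- Hᵢ and Sᵢ are vertex-disjoint
      (∀ i, Disjoint (Hs i).support (Ss i).support) :=
  combine_star_with_divisible_general H S hdiv hstar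
end

section
/- Let $\ell, a_1, \ldots, a_k$ be positive integers, let $F_1, \ldots, F_k$ be graphs, let $H$ be the disjoint union of $5a_j$ copies of $F_j$ for each $j$, and let $M$ be a matching of size $5\ell$ such that $M$ and $H$ are edge-disjoint. If $\ell > \sqrt{\tfrac{\ln 5}{2} \sum_{j=1}^k a_j |V(F_j)|^2}$, then $M \cup H$ can be decomposed into five graphs, each isomorphic to the disjoint union of $H/5$ and a matching of size $\ell$. -/
open Finset Function

theorem IsoPieces.ncard_support_eq {V W : Type} {A : SimpleGraph V} {B : SimpleGraph W}
    (h : IsoPieces A B) : A.support.ncard = B.support.ncard := by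
  obtain ⟨φ⟩ := h
  rw [← Nat.card_coe_set_eq, ← Nat.card_coe_set_eq]
  exact Nat.card_congr φ.toEquiv

/-- Pair the largest loads with the smallest increments. -/
theorem exists_perm_add_le_add_add {n : ℕ} (m : ℕ) (L y : Fin n → ℕ)
    (hL : ∀ i i', L i ≤ L i' + m) (hy : ∀ i, y i ≤ m) :
    ∃ σ : Equiv.Perm (Fin n), ∀ i i', L i + y (σ i) ≤ L i' + y (σ i') + m := by
  let τ := Tuple.sort L
  let ρ := Tuple.sort y
  refine ⟨τ.symm.trans (Fin.revPerm.trans ρ), fun i i' => ?_⟩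
  simp only [Equiv.trans_apply]
  rcases le_or_gt (τ.symm i) (τ.symm i') with h | h
  · have hLi : L i ≤ L i' := by
      simpa [τ] using Tuple.monotone_sort L h
    have := hy (ρ (Fin.revPerm (τ.symm i)))
    omega
  · have hyi : y (ρ (Fin.revPerm (τ.symm i))) ≤ y (ρ (Fin.revPerm (τ.symm i'))) :=
      Tuple.monotone_sort y (by simpa [Fin.rev_le_rev] using h.le)
    have := hL i i'
    omega

theorem exists_perms_sum_le_sum_add {ι : Type*} {n : ℕ} (m : ℕ) (Y : ι → Fin n → ℕ)
    (hY : ∀ x i, Y x i ≤ m) (s : Finset ι) :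
    ∃ σ : ι → Equiv.Perm (Fin n), ∀ i i',
      ∑ x ∈ s, Y x (σ x i) ≤ ∑ x ∈ s, Y x (σ x i') + m := by
  classical
  induction s using Finset.cons_induction with
  | empty => exact ⟨fun _ => 1, by simp⟩
  | cons x s hx ih =>
    obtain ⟨σ, hσ⟩ := ih
    obtain ⟨π, hπ⟩ := exists_perm_add_le_add_add m _ (Y x) hσ (hY x)
    have hs : ∀ i, ∑ z ∈ s, Y z (update σ x π z i) = ∑ z ∈ s, Y z (σ z i) :=
      fun i => sum_congr rfl fun z hz => by
        rw [update_of_ne (ne_of_mem_of_not_mem hz hx)]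
    refine ⟨update σ x π, fun i i' => ?_⟩
    simp only [sum_cons, update_self, hs]
    linarith [hπ i i']

theorem load_le_of_spread {ℓ m : ℕ} {L : Fin 5 → ℕ} (hL : ∀ i i', L i ≤ L i' + m)
    (hsum : ∑ i, L i ≤ 10 * ℓ) (hm : 3 * m ≤ 5 * ℓ) (i : Fin 5) : L i ≤ 4 * ℓ := by
  have : ∑ _i' : Fin 5, L i ≤ ∑ i', (L i' + m) := sum_le_sum fun i' _ => hL i i'
  simp only [sum_const, card_univ, Fintype.card_fin, smul_eq_mul, sum_add_distrib] at this
  omega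

theorem load_add_load_le_of_spread {ℓ m : ℕ} {L : Fin 5 → ℕ} (hL : ∀ i i', L i ≤ L i' + m)
    (hsum : ∑ i, L i ≤ 10 * ℓ) (hm : 3 * m ≤ 5 * ℓ) {i i' : Fin 5} (hii' : i ≠ i') :
    L i + L i' ≤ 6 * ℓ := by
  let rest : Finset (Fin 5) := univ \ {i, i'}
  have hrest : #rest = 3 := by
    rw [card_sdiff_of_subset (subset_univ _), card_pair hii']
    rfl
  have hsplit : ∑ t ∈ rest, L t + (L i + L i') = ∑ t, L t := by
    rw [← sum_pair hii']
    exact sum_sdiff (subset_univ _)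
  have bound (i₀ : Fin 5) : 3 * L i₀ ≤ ∑ t ∈ rest, L t + 3 * m := by
    have := sum_le_sum fun t (_ : t ∈ rest) => hL i₀ t
    simpa [hrest, sum_add_distrib] using this
  have := bound i
  have := bound i'
  omega

/-- Hall's condition for filling five classes of `ℓ` slots with the items of `s`, each item going
to a class that is not bad for it. -/
theorem card_le_card_biUnion_mul {α : Type*} {ℓ : ℕ} {s : Finset α} (hs : #s = 5 * ℓ)
    {bad : α → Fin 5 → Prop} [∀ e i, Decidable (bad e i)]
    (hbad : ∀ e ∈ s, #{i | bad e i} ≤ 2) (hone : ∀ i, #{e ∈ s | bad e i} ≤ 4 * ℓ)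
    (htwo : ∀ i i', i ≠ i' → #{e ∈ s | bad e i} + #{e ∈ s | bad e i'} ≤ 6 * ℓ)
    {t : Finset α} (hts : t ⊆ s) :
    #t ≤ #(t.biUnion fun e => ({i | ¬ bad e i} : Finset (Fin 5))) * ℓ := by
  set A := t.biUnion fun e => ({i | ¬ bad e i} : Finset (Fin 5))
  rcases t.eq_empty_or_nonempty with rfl | ⟨e₀, he₀⟩
  · simp
  have hA : 3 ≤ #A := by
    have hsplit := card_filter_add_card_filter_not (s := univ) (fun i => bad e₀ i)
    have : #({i | ¬ bad e₀ i} : Finset (Fin 5)) ≤ #A :=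
      card_le_card fun i hi => mem_biUnion.2 ⟨e₀, he₀, hi⟩
    have := hbad e₀ (hts he₀)
    simp only [card_univ, Fintype.card_fin] at hsplit
    omega
  have hmissing : ∀ i ∉ A, #t ≤ #{e ∈ s | bad e i} := fun i hi =>
    card_le_card fun e he => mem_filter.2 ⟨hts he, by_contra fun h =>
      hi (mem_biUnion.2 ⟨e, he, mem_filter.2 ⟨mem_univ _, h⟩⟩)⟩
  have hcompl : #Aᶜ + #A = 5 := by simp [card_compl_add_card A]
  rcases Aᶜ.eq_empty_or_nonempty with hA5 | ⟨i, hi⟩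
  · have := card_le_card hts
    rw [hA5, card_empty] at hcompl
    nlinarith
  have hi' := hmissing i (mem_compl.1 hi)
  rcases Nat.lt_or_ge 1 #Aᶜ with h2 | h1
  · obtain ⟨i₁, hi₁, i₂, hi₂, hne⟩ := one_lt_card.1 h2
    have := hmissing i₁ (mem_compl.1 hi₁)
    have := hmissing i₂ (mem_compl.1 hi₂)
    have := htwo i₁ i₂ hne
    nlinarith
  · have := hone i
    have : #A = 4 := by have := card_pos.2 ⟨i, hi⟩; omega
    rw [this]
    omega

theorem exists_balanced_coloring_avoiding {α : Type*} {ℓ : ℕ} {s : Finset α} (hs : #s = 5 * ℓ)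
    {bad : α → Fin 5 → Prop} [∀ e i, Decidable (bad e i)]
    (hbad : ∀ e ∈ s, #{i | bad e i} ≤ 2) (hone : ∀ i, #{e ∈ s | bad e i} ≤ 4 * ℓ)
    (htwo : ∀ i i', i ≠ i' → #{e ∈ s | bad e i} + #{e ∈ s | bad e i'} ≤ 6 * ℓ) :
    ∃ P : α → Fin 5, (∀ i, #{e ∈ s | P e = i} = ℓ) ∧ ∀ e ∈ s, ¬ bad e (P e) := by
  classical
  let slots (e : s) : Finset (Fin 5 × Fin ℓ) := ({i | ¬ bad e i} : Finset (Fin 5)) ×ˢ univ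
  have hall (t : Finset s) : #t ≤ #(t.biUnion slots) := by
    have hmap : (t.map (Function.Embedding.subtype _)).biUnion
        (fun e => ({i | ¬ bad e i} : Finset (Fin 5))) ×ˢ (univ : Finset (Fin ℓ))
          = t.biUnion slots := by
      ext; simp [slots]
    have := card_le_card_biUnion_mul hs hbad hone htwo (t := t.map (.subtype _))
      (fun e he => by obtain ⟨e, -, rfl⟩ := mem_map.1 he; exact e.2)
    rw [← hmap, card_product, card_univ, Fintype.card_fin]
    simpa using this
  obtain ⟨f, hf_inj, hf_slot⟩ := (all_card_le_biUnion_card_iff_exists_injective slots).1 hall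
  have hcard : Fintype.card s = Fintype.card (Fin 5 × Fin ℓ) := by simp [hs]
  let g : s ≃ Fin 5 × Fin ℓ :=
    .ofBijective f ((Fintype.bijective_iff_injective_and_card f).2 ⟨hf_inj, hcard⟩)
  let P (e : α) : Fin 5 := if h : e ∈ s then (g ⟨e, h⟩).1 else 0
  have hP (e : s) : P e = (g e).1 := dif_pos e.2
  refine ⟨P, fun i => ?_, fun e he => ?_⟩
  · have hfiber : {e ∈ s | P e = i} = ({i} ×ˢ univ).image fun p => (g.symm p : α) := by
      ext e
      simp only [mem_filter, mem_image, mem_product, mem_singleton, mem_univ, and_true]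
      constructor
      · rintro ⟨he, rfl⟩
        exact ⟨g ⟨e, he⟩, (hP ⟨e, he⟩).symm, by simp⟩
      · rintro ⟨p, rfl, rfl⟩
        exact ⟨(g.symm p).2, by simp [hP]⟩
    rw [hfiber, card_image_of_injective _ fun p q h => g.symm.injective (Subtype.ext h)]
    simp
  · rw [hP ⟨e, he⟩, Equiv.ofBijective_apply]
    simpa [slots] using hf_slot ⟨e, he⟩

theorem three_mul_le_five_mul_of_lt_sqrt {k ℓ : ℕ} {a n : Fin k → ℕ} (ha : ∀ j, 0 < a j)
    (h : (ℓ : ℝ) > √(Real.log 5 / 2 * ∑ j, (a j : ℝ) * (n j : ℝ) ^ 2)) (j : Fin k) :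
    3 * n j ≤ 5 * ℓ := by
  have hlog : 1 < Real.log 5 := by
    rw [Real.lt_log_iff_exp_lt (by norm_num)]
    linarith [Real.exp_one_lt_d9]
  have hterm : (n j : ℝ) ^ 2 ≤ ∑ j', (a j' : ℝ) * (n j' : ℝ) ^ 2 :=
    (le_mul_of_one_le_left (by positivity) (by exact_mod_cast ha j)).trans
      (single_le_sum (f := fun j' => (a j' : ℝ) * (n j' : ℝ) ^ 2)
        (fun _ _ => by positivity) (mem_univ j))
  have hℓ : 0 < (ℓ : ℝ) := (Real.sqrt_nonneg _).trans_lt h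
  have hsq := (Real.sqrt_lt' hℓ).1 h
  have : (3 * n j : ℝ) ≤ 5 * ℓ := by nlinarith
  exact_mod_cast this

section Meets

open scoped Classical

theorem card_meets_sym2_le_two {V κ : Type*} [Fintype κ] {T : κ → Set V}
    (hT : Pairwise (Disjoint on T)) (e : Sym2 V) : #{c | ∃ v ∈ e, v ∈ T c} ≤ 2 := by
  induction e using Sym2.ind with
  | _ v w =>
  refine (card_le_card_of_forall_subsingleton (fun c u => u ∈ T c) (t := {v, w})
    ?_ ?_).trans card_le_two
  · intro c hc
    obtain ⟨u, hu, huc⟩ := (mem_filter.1 hc).2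
    exact ⟨u, by simpa using Sym2.mem_iff.1 hu, huc⟩
  · intro u _ c hc c' hc'
    by_contra hne
    exact (hT hne).ne_of_mem hc.2 hc'.2 rfl

theorem sum_card_meets_le {V κ : Type*} [Fintype κ] {T : κ → Set V}
    (hT : Pairwise (Disjoint on T)) (s : Finset (Sym2 V)) :
    ∑ c, #{e ∈ s | ∃ v ∈ e, v ∈ T c} ≤ 2 * #s :=
  calc ∑ c, #{e ∈ s | ∃ v ∈ e, v ∈ T c} = ∑ e ∈ s, #{c | ∃ v ∈ e, v ∈ T c} :=
        sum_card_bipartiteAbove_eq_sum_card_bipartiteBelow fun c e => ∃ v ∈ e, v ∈ T c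
    _ ≤ ∑ _e ∈ s, 2 := sum_le_sum fun e _ => card_meets_sym2_le_two hT e
    _ = 2 * #s := by rw [sum_const, smul_eq_mul, mul_comm]

theorem card_meets_le_ncard_of_matching {V : Type*} {M : SimpleGraph V}
    (hM : ∀ v w w' : V, M.Adj v w → M.Adj v w' → w = w') {s : Finset (Sym2 V)}
    (hs : ↑s ⊆ M.edgeSet) {S : Set V} (hS : S.Finite) :
    #{e ∈ s | ∃ v ∈ e, v ∈ S} ≤ S.ncard := by
  rw [Set.ncard_eq_toFinset_card S hS]
  refine card_le_card_of_forall_subsingleton (fun e v => v ∈ e) ?_ ?_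
  · intro e he
    obtain ⟨v, hv, hvS⟩ := (mem_filter.1 he).2
    exact ⟨v, hS.mem_toFinset.2 hvS, hv⟩
  · intro v _ e ⟨he, hve⟩ e' ⟨he', hve'⟩
    obtain ⟨w, rfl⟩ := Sym2.mem_iff_exists.1 hve
    obtain ⟨w', rfl⟩ := Sym2.mem_iff_exists.1 hve'
    rw [hM v w w' (hs (mem_filter.1 he).1) (hs (mem_filter.1 he').1)]

theorem exists_perms_coloring_avoiding {V ι : Type*} [Fintype ι] {T : ι → Fin 5 → Set V}
    (hT : Pairwise (Disjoint on fun p : ι × Fin 5 => T p.1 p.2)) {ℓ : ℕ} {s : Finset (Sym2 V)}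
    (hs : #s = 5 * ℓ) (hmeet : ∀ x q, 3 * #{e ∈ s | ∃ v ∈ e, v ∈ T x q} ≤ 5 * ℓ) :
    ∃ σ : ι → Equiv.Perm (Fin 5), ∃ P : Sym2 V → Fin 5, (∀ i, #{e ∈ s | P e = i} = ℓ) ∧
      ∀ e ∈ s, ∀ x, ∀ v ∈ e, v ∉ T x (σ x (P e)) := by
  set m := 5 * ℓ / 3
  have hm : 3 * m ≤ 5 * ℓ := by omega
  let Y x q := #{e ∈ s | ∃ v ∈ e, v ∈ T x q}
  have hY x q : Y x q ≤ m := by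
    have : 3 * Y x q ≤ 5 * ℓ := hmeet x q
    omega
  obtain ⟨σ, hσ⟩ := exists_perms_sum_le_sum_add m Y hY univ
  let L i := ∑ x, Y x (σ x i)
  have hL_sum : ∑ i, L i ≤ 10 * ℓ :=
    calc ∑ i, L i = ∑ p : ι × Fin 5, Y p.1 p.2 := by
          rw [sum_comm, Fintype.sum_prod_type]
          exact sum_congr rfl fun x _ => Equiv.sum_comp (σ x) (Y x)
      _ ≤ 2 * #s := sum_card_meets_le hT s
      _ = 10 * ℓ := by omega
  let S i := ⋃ x, T x (σ x i)
  have hS : Pairwise (Disjoint on S) := fun i i' hii' => by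
    refine Set.disjoint_iUnion_left.2 fun x => Set.disjoint_iUnion_right.2 fun x' =>
      @hT (x, σ x i) (x', σ x' i') ?_
    simp only [ne_eq, Prod.mk.injEq, not_and]
    rintro rfl
    exact (σ x).injective.ne hii'
  have hS_meets (i : Fin 5) : #{e ∈ s | ∃ v ∈ e, v ∈ S i} ≤ L i := by
    refine (card_le_card fun e he => ?_).trans card_biUnion_le
    obtain ⟨hes, v, hv, hvS⟩ := mem_filter.1 he
    obtain ⟨x, hx⟩ := Set.mem_iUnion.1 hvS
    exact mem_biUnion.2 ⟨x, mem_univ x, mem_filter.2 ⟨hes, v, hv, hx⟩⟩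
  obtain ⟨P, hP_card, hP_avoid⟩ := exists_balanced_coloring_avoiding hs
    (bad := fun e i => ∃ v ∈ e, v ∈ S i) (fun e _ => card_meets_sym2_le_two hS e)
    (fun i => (hS_meets i).trans (load_le_of_spread hσ hL_sum hm i))
    (fun i i' hii' => (add_le_add (hS_meets i) (hS_meets i')).trans
      (load_add_load_le_of_spread hσ hL_sum hm hii'))
  exact ⟨σ, P, hP_card, fun e he x v hv hvT => hP_avoid e he ⟨v, hv, Set.mem_iUnion.2 ⟨x, hvT⟩⟩⟩

end Meets

section Copies

theorem Sigma.fin_mk_ne_mk_iff {ι : Type*} {n : ι → ℕ} {j j' : ι} {s : Fin (n j)}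
    {s' : Fin (n j')} :
    (⟨j, s⟩ : (j : ι) × Fin (n j)) ≠ ⟨j', s'⟩ ↔ j ≠ j' ∨ (s : ℕ) ≠ s' := by
  by_cases h : j = j'
  · subst h
    simp [Fin.ext_iff]
  · simp [h]

variable {V ι : Type*} {k : ℕ} {a N : Fin k → ℕ} {C : (j : Fin k) → Fin (N j) → SimpleGraph V}

theorem pairwise_disjoint_iSup_copies
    (hC : Pairwise (Disjoint on fun c : (j : Fin k) × Fin (N j) => (C c.1 c.2).support))
    (τ : ∀ j, ι × Fin (a j) ≃ Fin (N j)) :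
    Pairwise (Disjoint on fun i => ⨆ j, ⨆ r, C j (τ j (i, r))) := by
  intro i i' hii'
  refine iSup_disjoint_iff.2 fun j => iSup_disjoint_iff.2 fun r =>
    disjoint_iSup_iff.2 fun j' => disjoint_iSup_iff.2 fun r' =>
      SimpleGraph.disjoint_of_disjoint_support _ (@hC ⟨j, _⟩ ⟨j', _⟩ fun h => ?_)
  obtain ⟨rfl, h⟩ := Sigma.mk.inj_iff.1 h
  exact hii' (congrArg Prod.fst ((τ j).injective (eq_of_heq h)))

theorem iUnion_edgeSet_iSup_copies (τ : ∀ j, ι × Fin (a j) ≃ Fin (N j)) :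
    ⋃ i, (⨆ j, ⨆ r, C j (τ j (i, r))).edgeSet = ⋃ j, ⋃ s, (C j s).edgeSet := by
  simp only [SimpleGraph.edgeSet_iSup]
  rw [Set.iUnion_comm]
  refine Set.iUnion_congr fun j => ?_
  rw [← Set.iUnion_prod' fun p => (C j (τ j p)).edgeSet]
  exact (τ j).surjective.iUnion_comp fun s => (C j s).edgeSet

end Copies

theorem exists_decomposition_of_coloring {V ι : Type} {k ℓ : ℕ} {a N : Fin k → ℕ}
    {C : (j : Fin k) → Fin (N j) → SimpleGraph V} {F : Fin k → SimpleGraph V}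
    {H M : SimpleGraph V}
    (hC : Pairwise (Disjoint on fun c : (j : Fin k) × Fin (N j) => (C c.1 c.2).support))
    (hCiso : ∀ j s, IsoPieces (C j s) (F j)) (hH : H.edgeSet = ⋃ j, ⋃ s, (C j s).edgeSet)
    (hM : ∀ v w w' : V, M.Adj v w → M.Adj v w' → w = w') (hMH : Disjoint M.edgeSet H.edgeSet)
    (τ : ∀ j, ι × Fin (a j) ≃ Fin (N j)) (P : Sym2 V → ι)
    (hP_card : ∀ i, {e ∈ M.edgeSet | P e = i}.ncard = ℓ)
    (hP_avoid : ∀ e ∈ M.edgeSet, ∀ j r, ∀ v ∈ e, v ∉ (C j (τ j (P e, r))).support) :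
    ∃ G5 : ι → SimpleGraph V,
      (∀ i i', i ≠ i' → Disjoint (G5 i).edgeSet (G5 i').edgeSet) ∧
      (⋃ i, (G5 i).edgeSet) = M.edgeSet ∪ H.edgeSet ∧
      ∀ i, ∃ H' M' : SimpleGraph V,
        Disjoint H'.edgeSet M'.edgeSet ∧
        H'.edgeSet ∪ M'.edgeSet = (G5 i).edgeSet ∧
        Disjoint H'.support M'.support ∧
        (∀ v w w' : V, M'.Adj v w → M'.Adj v w' → w = w') ∧
        M'.edgeSet.ncard = ℓ ∧
        ∃ D : (j : Fin k) → Fin (a j) → SimpleGraph V,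
          (∀ j j' (s : Fin (a j)) (s' : Fin (a j')), (j ≠ j' ∨ (s : ℕ) ≠ (s' : ℕ)) →
            Disjoint (D j s).support (D j' s').support) ∧
          (∀ j s, IsoPieces (D j s) (F j)) ∧
          H'.edgeSet = ⋃ j, ⋃ s, (D j s).edgeSet := by
  let HC i := ⨆ j, ⨆ r, C j (τ j (i, r))
  let MC i := M.deleteEdges {e | P e ≠ i}
  have hHC_edgeSet i : (HC i).edgeSet = ⋃ j, ⋃ r, (C j (τ j (i, r))).edgeSet := by
    simp only [HC, SimpleGraph.edgeSet_iSup]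
  have hMC_edgeSet i : (MC i).edgeSet = {e ∈ M.edgeSet | P e = i} := by
    ext; simp [MC]
  have hHC_union : ⋃ i, (HC i).edgeSet = H.edgeSet := hH ▸ iUnion_edgeSet_iSup_copies τ
  have hHC_sub i : (HC i).edgeSet ⊆ H.edgeSet :=
    hHC_union ▸ Set.subset_iUnion (fun i => (HC i).edgeSet) i
  have hMC_sub i : (MC i).edgeSet ⊆ M.edgeSet := by simp [MC]
  have hHC_MC i i' : Disjoint (HC i).edgeSet (MC i').edgeSet :=
    hMH.symm.mono (hHC_sub i) (hMC_sub i')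
  refine ⟨fun i => HC i ⊔ MC i, fun i i' hii' => ?_, ?_, fun i => ⟨HC i, MC i, hHC_MC i i,
    (SimpleGraph.edgeSet_sup _ _).symm, ?_, ?_, hMC_edgeSet i ▸ hP_card i,
    fun j r => C j (τ j (i, r)), ?_, fun j r => hCiso _ _, hHC_edgeSet i⟩⟩
  · have hMC_disj : Disjoint (MC i).edgeSet (MC i').edgeSet := by
      rw [hMC_edgeSet, hMC_edgeSet]
      exact Set.disjoint_left.2 fun e he he' => hii' (he.2.symm.trans he'.2)
    rw [SimpleGraph.edgeSet_sup, SimpleGraph.edgeSet_sup]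
    exact .union_left
      (.union_right (SimpleGraph.disjoint_edgeSet.2 (pairwise_disjoint_iSup_copies hC τ hii'))
        (hHC_MC i i'))
      (.union_right (hHC_MC i' i).symm hMC_disj)
  · have hMC_union : ⋃ i, (MC i).edgeSet = M.edgeSet := by
      ext e
      simp [hMC_edgeSet]
    simp only [SimpleGraph.edgeSet_sup, Set.iUnion_union_distrib, hHC_union, hMC_union,
      Set.union_comm]
  · refine Set.disjoint_left.2 fun v ⟨w, hw⟩ ⟨w', hw'⟩ => ?_
    obtain ⟨j, hj⟩ := SimpleGraph.iSup_adj.1 hw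
    obtain ⟨r, hadj⟩ := SimpleGraph.iSup_adj.1 hj
    obtain ⟨hvw', hP⟩ := SimpleGraph.deleteEdges_adj.1 hw'
    have hP : P s(v, w') = i := by simpa using hP
    exact hP_avoid _ hvw' j r v (Sym2.mem_mk_left v w') (hP ▸ ⟨w, hadj⟩)
  · exact fun v w w' h h' => hM v w w' (SimpleGraph.deleteEdges_adj.1 h).1
      (SimpleGraph.deleteEdges_adj.1 h').1
  · refine fun j j' s s' hne => @hC ⟨j, _⟩ ⟨j', _⟩ fun h => Sigma.fin_mk_ne_mk_iff.2 hne ?_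
    obtain ⟨rfl, h⟩ := Sigma.mk.inj_iff.1 h
    cases (Prod.ext_iff.1 ((τ j).injective (eq_of_heq h))).2
    rfl

/-- Combining a matching with a union of copies: if `H` is a vertex-disjoint union of
`5 * a j` copies of `F j` (given by the family `C`), `M` is a matching of size `5ℓ`
edge-disjoint from `H`, and `ℓ > √((ln 5 / 2) ∑ⱼ a j |V(F j)|²)`, then `M ∪ H` decomposes
into five graphs, each the vertex-disjoint union of a copy of `H/5` (i.e. `a j` copies of
each `F j`) and a matching of size `ℓ`. -/
theorem combine_matching_with_copies {V : Type} [Fintype V]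
    (k ℓ : ℕ) (a : Fin k → ℕ) (ha : ∀ j, 0 < a j)
    (C : (j : Fin k) → Fin (5 * a j) → SimpleGraph V) (H M : SimpleGraph V)
    (hCdisj : ∀ j j' (s : Fin (5 * a j)) (s' : Fin (5 * a j')), (j ≠ j' ∨ (s : ℕ) ≠ (s' : ℕ)) →
      Disjoint (C j s).support (C j' s').support)
    (hCiso : ∀ j s s', IsoPieces (C j s) (C j s'))
    (hH : H.edgeSet = ⋃ j, ⋃ s, (C j s).edgeSet)
    (hM : ∀ v w w' : V, M.Adj v w → M.Adj v w' → w = w')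
    (hMcard : M.edgeSet.ncard = 5 * ℓ)
    (hMH : Disjoint M.edgeSet H.edgeSet)
    (hbound : (ℓ : ℝ) > Real.sqrt ((Real.log 5 / 2) *
      ∑ j, (a j : ℝ) *
        ((C j ⟨0, by have := ha j; omega⟩).support.ncard : ℝ) ^ 2)) :
    ∃ G5 : Fin 5 → SimpleGraph V,
      (∀ i i', i ≠ i' → Disjoint (G5 i).edgeSet (G5 i').edgeSet) ∧
      (⋃ i, (G5 i).edgeSet) = M.edgeSet ∪ H.edgeSet ∧
      ∀ i, ∃ H' M' : SimpleGraph V,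
        Disjoint H'.edgeSet M'.edgeSet ∧
        H'.edgeSet ∪ M'.edgeSet = (G5 i).edgeSet ∧
        Disjoint H'.support M'.support ∧
        (∀ v w w' : V, M'.Adj v w → M'.Adj v w' → w = w') ∧
        M'.edgeSet.ncard = ℓ ∧
        ∃ D : (j : Fin k) → Fin (a j) → SimpleGraph V,
          (∀ j j' (s : Fin (a j)) (s' : Fin (a j')), (j ≠ j' ∨ (s : ℕ) ≠ (s' : ℕ)) →
            Disjoint (D j s).support (D j' s').support) ∧
          (∀ j s, IsoPieces (D j s) (C j ⟨0, by have := ha j; omega⟩)) ∧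
          H'.edgeSet = ⋃ j, ⋃ s, (D j s).edgeSet := by
  classical
  let F j := C j ⟨0, by have := ha j; omega⟩
  have hC : Pairwise (Disjoint on fun c : (j : Fin k) × Fin (5 * a j) => (C c.1 c.2).support) :=
    fun ⟨j, s⟩ ⟨j', s'⟩ h =>
      hCdisj j j' s s' ((Sigma.fin_mk_ne_mk_iff (n := fun j => 5 * a j)).1 h)
  have hF := three_mul_le_five_mul_of_lt_sqrt (n := fun j => (F j).support.ncard) ha hbound
  -- group `⟨j, r⟩` consists of the copies `r + a j * q`, `q < 5`, of `F j`
  let groups : ((j : Fin k) × Fin (a j)) × Fin 5 ≃ (j : Fin k) × Fin (5 * a j) :=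
    (Equiv.sigmaProdDistrib _ _).trans
      (Equiv.sigmaCongrRight fun j => (Equiv.prodComm _ _).trans finProdFinEquiv)
  have hs : #M.edgeFinset = 5 * ℓ := by rwa [← Set.ncard_coe_finset, SimpleGraph.coe_edgeFinset]
  obtain ⟨σ, P, hP_card, hP_avoid⟩ := exists_perms_coloring_avoiding
    (T := fun (x : (j : Fin k) × Fin (a j)) q => (C x.1 (finProdFinEquiv (q, x.2))).support)
    (hC.comp_of_injective groups.injective) hs fun x q => by
      refine (Nat.mul_le_mul_left 3 (card_meets_le_ncard_of_matching hM (by simp)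
        (Set.toFinite _))).trans ?_
      rw [(hCiso _ _ _).ncard_support_eq]
      exact hF x.1
  refine exists_decomposition_of_coloring hC (fun j s => hCiso j s _) hH hM hMH
    (fun j => (Equiv.prodCongrLeft fun r => σ ⟨j, r⟩).trans finProdFinEquiv) P (fun i => ?_)
    fun e he j r => hP_avoid e (by simpa using he) ⟨j, r⟩
  rw [← SimpleGraph.coe_edgeFinset, ← hP_card i, ← Set.ncard_coe_finset, coe_filter]
  rfl
end

section
/- Let $t \ge 1$ be a fixed integer, $n$ a sufficiently large integer, and $k$ an integer with $n/\sqrt{t} \le k \le n^2/t^{5/2}$. Then every graph $G$ on $n$ vertices can be edge-decomposed into $k$ pairwise isomorphic $K_{t,t}$-forests together with a remainder of at most $4n^2/\sqrt{t}$ edges. -/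
/-- `(A, B)` spans a copy of `K_{t,t}` in `G`. -/
def IsKttCopy {V : Type*} (G : SimpleGraph V) (t : ℕ) (A B : Finset V) : Prop :=
  A.card = t ∧ B.card = t ∧ Disjoint A B ∧ ∀ x ∈ A, ∀ y ∈ B, G.Adj x y

/-!
Kővári–Sós–Turán counting shows that, for `n` large, every graph on `n` vertices with at least
`n ⌊n/t⌋` edges contains a `K_{t,t}`: otherwise each `t`-set has fewer than `t` common
neighbours, so `∑ C(deg v, t) ≤ (t - 1) C(n, t)`, while at least `⌊n/t⌋` vertices have degree at
least `⌊n/t⌋`. Deleting the at most `|F| n` edges that meet a set `F` of used vertices keeps this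
density, so vertex-disjoint copies can be chosen greedily, `s` of them forming a forest; deleting
the `s t²` edges of that forest and repeating gives `k` edge-disjoint forests. Taking `s` as large
as the edge count allows leaves fewer than `n ⌊n/t⌋ + 2t(s + 1)n + k t²` edges, and for
`n/√t ≤ k ≤ n²/t^{5/2}` these terms are at most `n²/√t`, `2n²/√t` and `n²/√t`.
-/

open Finset Function Fintype SimpleGraph
open scoped Nat

theorem IsKttCopy.mono {V : Type*} {G H : SimpleGraph V} {t : ℕ} {A B : Finset V}
    (h : IsKttCopy G t A B) (hGH : G ≤ H) : IsKttCopy H t A B :=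
  ⟨h.1, h.2.1, h.2.2.1, fun x hx y hy => hGH (h.2.2.2 x hx y hy)⟩

section CrossEdges

variable {V : Type*} [DecidableEq V]

def crossEdges (A B : Finset V) : Finset (Sym2 V) :=
  (A ×ˢ B).image fun q => s(q.1, q.2)

theorem mem_crossEdges {A B : Finset V} {e : Sym2 V} :
    e ∈ crossEdges A B ↔ ∃ a ∈ A, ∃ b ∈ B, s(a, b) = e := by
  simp [crossEdges, and_assoc]

theorem card_crossEdges {A B : Finset V} (h : Disjoint A B) :
    #(crossEdges A B) = #A * #B := by
  rw [crossEdges, card_image_of_injOn, card_product]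
  rintro ⟨a, b⟩ hab ⟨a', b'⟩ hab' heq
  simp only [coe_product, Set.mem_prod, mem_coe] at hab hab'
  rcases Sym2.eq_iff.mp heq with ⟨rfl, rfl⟩ | ⟨rfl, rfl⟩
  · rfl
  · exact (disjoint_left.mp h hab.1 hab'.2).elim

theorem disjoint_crossEdges {A B A' B' : Finset V} (h : Disjoint (A ∪ B) (A' ∪ B')) :
    Disjoint (crossEdges A B) (crossEdges A' B') := by
  refine disjoint_left.mpr fun e he he' => ?_
  obtain ⟨a, ha, b, hb, rfl⟩ := mem_crossEdges.mp he
  obtain ⟨a', ha', b', hb', heq⟩ := mem_crossEdges.mp he'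
  have ha'' : a ∈ A' ∪ B' := by
    rcases Sym2.eq_iff.mp heq with ⟨rfl, rfl⟩ | ⟨rfl, rfl⟩ <;> simp [*]
  exact disjoint_left.mp h (mem_union_left _ ha) ha''

namespace IsKttCopy

variable {G : SimpleGraph V} {t : ℕ} {A B : Finset V}

theorem card_union (h : IsKttCopy G t A B) : #(A ∪ B) = 2 * t := by
  rw [card_union_of_disjoint h.2.2.1, h.1, h.2.1, two_mul]

theorem card_crossEdges (h : IsKttCopy G t A B) : #(crossEdges A B) = t ^ 2 := by
  rw [_root_.card_crossEdges h.2.2.1, h.1, h.2.1, sq]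

theorem crossEdges_subset [Fintype G.edgeSet] (h : IsKttCopy G t A B) :
    crossEdges A B ⊆ G.edgeFinset := by
  intro e he
  obtain ⟨a, ha, b, hb, rfl⟩ := mem_crossEdges.mp he
  exact G.mem_edgeFinset.mpr (h.2.2.2 a ha b hb)

theorem exists_adj (h : IsKttCopy G t A B) (ht : 0 < t) {x : V} (hx : x ∈ A ∪ B) :
    ∃ y, G.Adj x y := by
  rcases mem_union.mp hx with hxA | hxB
  · obtain ⟨y, hy⟩ := card_pos.mp (h.2.1 ▸ ht)
    exact ⟨y, h.2.2.2 x hxA y hy⟩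
  · obtain ⟨y, hy⟩ := card_pos.mp (h.1 ▸ ht)
    exact ⟨y, (h.2.2.2 y hy x hxB).symm⟩

end IsKttCopy

variable {t : ℕ}

def forestEdges {ι : Type*} [Fintype ι] (A B : ι → Finset V) : Finset (Sym2 V) :=
  univ.biUnion fun j => crossEdges (A j) (B j)

theorem card_forestEdges {ι : Type*} [Fintype ι] {G : SimpleGraph V} {A B : ι → Finset V}
    (hcopy : ∀ j, IsKttCopy G t (A j) (B j))
    (hdisj : Pairwise (Disjoint on fun j => A j ∪ B j)) :
    #(forestEdges A B) = card ι * t ^ 2 := by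
  rw [forestEdges, card_biUnion fun i _ j _ hij => disjoint_crossEdges (hdisj hij)]
  simp [(hcopy _).card_crossEdges]

theorem forestEdges_subset {ι : Type*} [Fintype ι] {G : SimpleGraph V} [Fintype G.edgeSet]
    {A B : ι → Finset V} (hcopy : ∀ j, IsKttCopy G t (A j) (B j)) :
    forestEdges A B ⊆ G.edgeFinset :=
  biUnion_subset.mpr fun j _ => (hcopy j).crossEdges_subset

theorem pairwise_disjoint_crossEdges {ι κ : Type*} [Fintype κ] {A B : ι → κ → Finset V}
    (hdisj : ∀ i, Pairwise (Disjoint on fun j => A i j ∪ B i j))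
    (hedge : Pairwise (Disjoint on fun i => forestEdges (A i) (B i))) :
    Pairwise (Disjoint on fun p : ι × κ => crossEdges (A p.1 p.2) (B p.1 p.2)) := by
  rintro ⟨i, j⟩ ⟨i', j'⟩ hne
  by_cases hi : i = i'
  · subst hi
    exact disjoint_crossEdges (hdisj i fun hj => hne (Prod.ext rfl hj))
  · exact (hedge hi).mono
      (subset_biUnion_of_mem (fun j => crossEdges (A i j) (B i j)) (mem_univ j))
      (subset_biUnion_of_mem (fun j => crossEdges (A i' j) (B i' j)) (mem_univ j'))

theorem card_edgeFinset_sdiff_biUnion_forestEdges {ι κ : Type*} [Fintype ι] [Fintype κ]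
    {G : SimpleGraph V} [Fintype G.edgeSet] {A B : ι → κ → Finset V}
    (hcopy : ∀ i j, IsKttCopy G t (A i j) (B i j))
    (hdisj : ∀ i, Pairwise (Disjoint on fun j => A i j ∪ B i j))
    (hedge : Pairwise (Disjoint on fun i => forestEdges (A i) (B i))) :
    #(G.edgeFinset \ univ.biUnion fun i => forestEdges (A i) (B i)) =
      #G.edgeFinset - card ι * (card κ * t ^ 2) := by
  rw [card_sdiff_of_subset (biUnion_subset.mpr fun i _ => forestEdges_subset (hcopy i)),
    card_biUnion fun i _ i' _ hi => hedge hi]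
  simp [card_forestEdges (hcopy _) (hdisj _)]

end CrossEdges

theorem sub_one_mul_choose_lt_mul_choose {t q n : ℕ} (h2t : 2 * t ≤ q)
    (hq : (t - 1) * (4 * t) ^ t < q) (hn : n ≤ 2 * t * q) :
    (t - 1) * n.choose t < q * q.choose t := by
  have hn' : t ! * n.choose t ≤ n ^ t := by
    rw [← Nat.descFactorial_eq_factorial_mul_choose]
    exact Nat.descFactorial_le_pow n t
  have hq' : q ^ t ≤ 2 ^ t * (t ! * q.choose t) := by
    rw [← Nat.descFactorial_eq_factorial_mul_choose]
    calc q ^ t ≤ (2 * (q + 1 - t)) ^ t := Nat.pow_le_pow_left (by omega) t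
      _ = 2 ^ t * (q + 1 - t) ^ t := mul_pow ..
      _ ≤ 2 ^ t * q.descFactorial t := Nat.mul_le_mul_left _ (Nat.pow_sub_le_descFactorial q t)
  refine Nat.lt_of_mul_lt_mul_left (a := 2 ^ t * t !) ?_
  calc 2 ^ t * t ! * ((t - 1) * n.choose t) = 2 ^ t * (t - 1) * (t ! * n.choose t) := by ring
    _ ≤ 2 ^ t * (t - 1) * (2 * t * q) ^ t := by
      gcongr; exact hn'.trans (Nat.pow_le_pow_left hn t)
    _ = (t - 1) * (4 * t) ^ t * q ^ t := by
      rw [mul_pow 4, show (4 : ℕ) ^ t = 2 ^ t * 2 ^ t by rw [← mul_pow]; rfl]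
      ring
    _ < q * q ^ t := Nat.mul_lt_mul_of_pos_right hq (pow_pos (by omega) t)
    _ ≤ q * (2 ^ t * (t ! * q.choose t)) := Nat.mul_le_mul_left q hq'
    _ = 2 ^ t * t ! * (q * q.choose t) := by ring

section KovariSosTuran

variable {V : Type*} [Fintype V] (H : SimpleGraph V) [DecidableRel H.Adj] {t : ℕ}

theorem le_card_filter_le_degree [Nonempty V] {d : ℕ} (h : card V * d ≤ #H.edgeFinset) :
    d ≤ #{v | d ≤ H.degree v} := by
  set S : Finset V := {v | d ≤ H.degree v}
  have hhigh : ∑ v ∈ S, H.degree v ≤ #S * card V :=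
    sum_le_card_nsmul _ _ _ fun v _ => (H.degree_lt_card_verts v).le
  have hlow : ∑ v ∈ univ.filter (¬d ≤ H.degree ·), H.degree v ≤ card V * d :=
    calc _ ≤ #(univ.filter (¬d ≤ H.degree ·)) * d :=
          sum_le_card_nsmul _ _ _ fun v hv => (not_le.mp (mem_filter.mp hv).2).le
      _ ≤ card V * d := Nat.mul_le_mul_right _ (card_filter_le _ _)
  have hsum : ∑ v ∈ S, H.degree v + ∑ v ∈ univ.filter (¬d ≤ H.degree ·), H.degree v =
      2 * #H.edgeFinset := by
    rw [sum_filter_add_sum_filter_not, sum_degrees_eq_twice_card_edges]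
  have : card V * d ≤ card V * #S := by linarith
  exact Nat.le_of_mul_le_mul_left this card_pos

variable [DecidableEq V]

theorem exists_isKttCopy_of_le_card_filter {T : Finset V} (hT : #T = t)
    (h : t ≤ #{v | T ⊆ H.neighborFinset v}) : ∃ B, IsKttCopy H t T B := by
  obtain ⟨B, hB, rfl⟩ := exists_subset_card_eq h
  refine ⟨B, hT, rfl, disjoint_left.mpr fun a haT haB => ?_, fun a ha b hb => ?_⟩
  · exact H.irrefl ((H.mem_neighborFinset a a).mp ((mem_filter.mp (hB haB)).2 haT))
  · exact ((H.mem_neighborFinset b a).mp ((mem_filter.mp (hB hb)).2 ha)).symm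

theorem sum_choose_degree_le (hfree : ∀ A B, ¬IsKttCopy H t A B) :
    ∑ v, (H.degree v).choose t ≤ (t - 1) * (card V).choose t := by
  calc ∑ v, (H.degree v).choose t
      = ∑ v, #{T ∈ powersetCard t univ | T ⊆ H.neighborFinset v} := by
        refine sum_congr rfl fun v _ => ?_
        rw [← card_neighborFinset_eq_degree, ← card_powersetCard]
        congr 1
        ext T
        simp [mem_powersetCard, and_comm]
    _ = ∑ T ∈ powersetCard t univ, #{v | T ⊆ H.neighborFinset v} :=
        sum_card_bipartiteAbove_eq_sum_card_bipartiteBelow _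
    _ ≤ ∑ _T ∈ powersetCard t univ, (t - 1) := by
        refine sum_le_sum fun T hT => ?_
        by_contra! hlt
        obtain ⟨B, hB⟩ :=
          exists_isKttCopy_of_le_card_filter H (mem_powersetCard.mp hT).2 (by omega)
        exact hfree T B hB
    _ = (t - 1) * (card V).choose t := by simp [mul_comm]

-- Large enough that `q = n / t` satisfies the hypotheses of `sub_one_mul_choose_lt_mul_choose`.
def kstThreshold (t : ℕ) : ℕ := t * ((t - 1) * (4 * t) ^ t + 2 * t + 1)

theorem exists_isKttCopy_of_card_mul_div_le (ht : 0 < t) (hn : kstThreshold t ≤ card V)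
    (hE : card V * (card V / t) ≤ #H.edgeFinset) : ∃ A B, IsKttCopy H t A B := by
  by_contra! hfree
  set n := card V
  set q := n / t
  have hq : (t - 1) * (4 * t) ^ t + 2 * t + 1 ≤ q :=
    (Nat.le_div_iff_mul_le ht).mpr (by rw [mul_comm]; exact hn)
  have hnq : n ≤ 2 * t * q :=
    calc n ≤ t * q + t := (Nat.lt_mul_div_succ n ht).le
      _ ≤ 2 * t * q := by have := Nat.le_mul_of_pos_right t (show 0 < q by omega); linarith
  have : Nonempty V := card_pos_iff.mp (lt_of_lt_of_le (Nat.mul_pos ht (Nat.succ_pos _)) hn)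
  have hlow : q * q.choose t ≤ (t - 1) * n.choose t :=
    calc q * q.choose t ≤ #{v | q ≤ H.degree v} * q.choose t :=
          Nat.mul_le_mul_right _ (le_card_filter_le_degree H hE)
      _ = ∑ v with q ≤ H.degree v, q.choose t := by rw [sum_const, smul_eq_mul]
      _ ≤ ∑ v with q ≤ H.degree v, (H.degree v).choose t :=
          sum_le_sum fun v hv => Nat.choose_le_choose t (mem_filter.mp hv).2
      _ ≤ ∑ v, (H.degree v).choose t := sum_le_sum_of_subset (filter_subset _ _)
      _ ≤ (t - 1) * n.choose t := sum_choose_degree_le H hfree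
  exact (sub_one_mul_choose_lt_mul_choose (by omega) (by omega) hnq).not_ge hlow

end KovariSosTuran

section Forests

variable {V : Type*} [Fintype V] [DecidableEq V] {t : ℕ}

theorem exists_isKttCopy_disjoint (H : SimpleGraph V) [DecidableRel H.Adj] (ht : 0 < t)
    (hn : kstThreshold t ≤ card V) (F : Finset V)
    (hE : card V * (card V / t) + #F * card V ≤ #H.edgeFinset) :
    ∃ A B, IsKttCopy H t A B ∧ Disjoint (A ∪ B) F := by
  set D := F.biUnion fun v => H.incidenceFinset v
  have hD : #D ≤ #F * card V := card_biUnion_le_card_mul _ _ _ fun v _ => by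
    rw [card_incidenceFinset_eq_degree]; exact (H.degree_lt_card_verts v).le
  obtain ⟨A, B, hAB⟩ := exists_isKttCopy_of_card_mul_div_le (H.deleteEdges D) ht hn (by
    rw [edgeFinset_deleteEdges]; have := le_card_sdiff D H.edgeFinset; omega)
  refine ⟨A, B, hAB.mono (H.deleteEdges_le _), disjoint_left.mpr fun x hx hxF => ?_⟩
  obtain ⟨y, hxy⟩ := hAB.exists_adj ht hx
  rw [deleteEdges_adj] at hxy
  exact hxy.2 (mem_coe.mpr (mem_biUnion.mpr
    ⟨x, hxF, (H.mem_incidenceFinset x _).mpr ⟨hxy.1, Sym2.mem_mk_left x y⟩⟩))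

theorem exists_isKttForest (H : SimpleGraph V) [DecidableRel H.Adj] (ht : 0 < t)
    (hn : kstThreshold t ≤ card V) :
    ∀ s : ℕ, (∀ j < s, card V * (card V / t) + j * (2 * t * card V) ≤ #H.edgeFinset) →
    ∃ A B : Fin s → Finset V,
      (∀ j, IsKttCopy H t (A j) (B j)) ∧ Pairwise (Disjoint on fun j => A j ∪ B j)
  | 0, _ => ⟨Fin.elim0, Fin.elim0, fun j => j.elim0, fun j => j.elim0⟩
  | s + 1, hE => by
    obtain ⟨A, B, hcopy, hdisj⟩ := exists_isKttForest H ht hn s fun j hj => hE j (by omega)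
    set F := univ.biUnion fun j => A j ∪ B j
    have hF : #F ≤ 2 * t * s := (card_biUnion_le_card_mul _ _ _ fun j _ =>
      (hcopy j).card_union.le).trans (by simp [mul_comm])
    obtain ⟨A₀, B₀, hcopy₀, hdisj₀⟩ := exists_isKttCopy_disjoint H ht hn F (by
      have := hE s (by omega); have := Nat.mul_le_mul_right (card V) hF; linarith)
    have hsub : ∀ j, A j ∪ B j ⊆ F := fun j =>
      subset_biUnion_of_mem (fun j => A j ∪ B j) (mem_univ j)
    refine ⟨Fin.cons A₀ A, Fin.cons B₀ B, fun j => Fin.cases hcopy₀ hcopy j,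
      pairwise_fin_succ_iff.mpr ⟨fun j => ?_, fun j => ?_, hdisj⟩⟩
    · exact (hdisj₀.mono_right (hsub j)).symm
    · exact hdisj₀.mono_right (hsub j)

theorem exists_isKttForests (ht : 0 < t) (hn : kstThreshold t ≤ card V) (s : ℕ) :
    ∀ (k : ℕ) (H : SimpleGraph V) [DecidableRel H.Adj],
    (∀ j < s,
      card V * (card V / t) + j * (2 * t * card V) + k * (s * t ^ 2) ≤ #H.edgeFinset) →
    ∃ A B : Fin k → Fin s → Finset V,
      (∀ i j, IsKttCopy H t (A i j) (B i j)) ∧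
      (∀ i, Pairwise (Disjoint on fun j => A i j ∪ B i j)) ∧
      Pairwise (Disjoint on fun i => forestEdges (A i) (B i))
  | 0, _, _, _ => ⟨Fin.elim0, Fin.elim0, fun i => i.elim0, fun i => i.elim0, fun i => i.elim0⟩
  | k + 1, H, _, hE => by
    obtain ⟨A₀, B₀, hcopy₀, hdisj₀⟩ := exists_isKttForest H ht hn s fun j hj => by
      have := hE j hj; linarith [Nat.zero_le ((k + 1) * (s * t ^ 2))]
    set D := forestEdges A₀ B₀
    have hD : #D = s * t ^ 2 := by rw [card_forestEdges hcopy₀ hdisj₀, Fintype.card_fin]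
    obtain ⟨A, B, hcopy, hdisj, hedge⟩ := exists_isKttForests ht hn s k (H.deleteEdges D)
      fun j hj => by
        have h₁ := hE j hj
        have h₂ := le_card_sdiff D H.edgeFinset
        rw [add_one_mul k] at h₁
        rw [hD] at h₂
        rw [edgeFinset_deleteEdges]
        omega
    have hsub : ∀ i, forestEdges (A i) (B i) ⊆ H.edgeFinset \ D := fun i => by
      rw [← edgeFinset_deleteEdges]; exact forestEdges_subset (hcopy i)
    refine ⟨Fin.cons A₀ A, Fin.cons B₀ B,
      fun i => Fin.cases hcopy₀ (fun i j => (hcopy i j).mono (H.deleteEdges_le _)) i,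
      fun i => Fin.cases hdisj₀ hdisj i,
      pairwise_fin_succ_iff.mpr ⟨fun i => ?_, fun i => ?_, hedge⟩⟩
    · exact (disjoint_sdiff.mono_right (hsub i)).symm
    · exact disjoint_sdiff.mono_right (hsub i)

end Forests

theorem two_mul_card_edgeFinset_le_sq {V : Type*} [Fintype V] (G : SimpleGraph V)
    [DecidableRel G.Adj] : 2 * #G.edgeFinset ≤ card V ^ 2 :=
  calc 2 * #G.edgeFinset = ∑ v, G.degree v := G.sum_degrees_eq_twice_card_edges.symm
    _ ≤ ∑ _v : V, card V := sum_le_sum fun v _ => (G.degree_lt_card_verts v).le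
    _ = card V ^ 2 := by simp [sq]

theorem exists_largest_fitting_count (m a b d : ℕ) (h : 0 < b + d) :
    ∃ s, (∀ j < s, a + j * b + s * d ≤ m) ∧ s * d ≤ m ∧ m < a + (s + 1) * (b + d) := by
  have h₁ : (m - a) / (b + d) * (b + d) ≤ m - a := Nat.div_mul_le_self _ _
  have h₂ : m - a < (m - a) / (b + d) * (b + d) + (b + d) := Nat.lt_div_mul_add h
  set s := (m - a) / (b + d)
  rw [mul_add] at h₁ h₂
  refine ⟨s, fun j hj => ?_, by omega, by rw [add_one_mul, mul_add]; omega⟩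
  have : j * b ≤ s * b := Nat.mul_le_mul_right b hj.le
  have : 0 < s * b + s * d := by rw [← mul_add]; exact Nat.mul_pos (by omega) h
  omega

theorem leftover_le {n k s t : ℕ} (ht : 1 ≤ t) (hn : 2 * t ^ 2 ≤ n)
    (hk₁ : (n : ℝ) / √t ≤ k) (hk₂ : (k : ℝ) ≤ n ^ 2 / t ^ ((5 : ℝ) / 2))
    (hs : 2 * (s * (k * t ^ 2)) ≤ n ^ 2) :
    ((n * (n / t) + (s + 1) * (2 * t * n) + k * t ^ 2 : ℕ) : ℝ) ≤ 4 * n ^ 2 / √t := by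
  have hq : ((n / t : ℕ) : ℝ) * t ≤ n := by exact_mod_cast Nat.div_mul_le_self n t
  have ht5 : (t : ℝ) ^ ((5 : ℝ) / 2) = √t ^ 5 := by
    rw [Real.sqrt_eq_rpow, ← Real.rpow_natCast, ← Real.rpow_mul (Nat.cast_nonneg _)]
    norm_num
  have hn' : 2 * (t : ℝ) ^ 2 ≤ n := by exact_mod_cast hn
  have hs' : 2 * (s * (k * (t : ℝ) ^ 2)) ≤ n ^ 2 := by exact_mod_cast hs
  set r := √(t : ℝ)
  have hr : r ^ 2 = t := Real.sq_sqrt (Nat.cast_nonneg t)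
  have hr1 : 1 ≤ r := Real.one_le_sqrt.mpr (by exact_mod_cast ht)
  rw [← hr] at hq hn' hs'
  rw [div_le_iff₀ (by positivity)] at hk₁
  rw [ht5, le_div_iff₀ (by positivity)] at hk₂
  rw [le_div_iff₀ (by positivity)]
  push_cast
  rw [← hr]
  have h₁ : (n : ℝ) * (n / t : ℕ) * r ≤ n ^ 2 := by nlinarith
  have h₂ : 2 * (s : ℝ) * r ^ 3 * n ≤ n ^ 2 :=
    calc 2 * (s : ℝ) * r ^ 3 * n ≤ 2 * s * r ^ 3 * (k * r) := by gcongr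
      _ = 2 * (s * (k * (r ^ 2) ^ 2)) := by ring
      _ ≤ n ^ 2 := hs'
  have h₃ : 2 * r ^ 3 * (n : ℝ) ≤ n ^ 2 := by nlinarith
  nlinarith

/-- Decomposition into `k` isomorphic `K_{t,t}`-forests: for fixed `t ≥ 1`, large `n`, and
`n/√t ≤ k ≤ n²/t^{5/2}`, every graph on `n` vertices decomposes into `k` pairwise isomorphic
`K_{t,t}`-forests (each consisting of `s` vertex-disjoint copies of `K_{t,t}`) and a
remainder of at most `4n²/√t` edges. -/
theorem isomorphic_Ktt_forest_decomposition (t : ℕ) (ht : 1 ≤ t) :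
    ∃ n₀ : ℕ, ∀ n ≥ n₀, ∀ k : ℕ,
      (n : ℝ) / Real.sqrt t ≤ k → (k : ℝ) ≤ (n : ℝ) ^ 2 / (t : ℝ) ^ ((5 : ℝ) / 2) →
      ∀ (V : Type) [Fintype V] [DecidableEq V], Fintype.card V = n →
      ∀ (G : SimpleGraph V) [DecidableRel G.Adj],
      ∃ (s : ℕ) (A B : Fin k → Fin s → Finset V),
        (∀ i j, IsKttCopy G t (A i j) (B i j)) ∧
        -- copies within the same forest are vertex-disjoint
        (∀ i j j', j ≠ j' → Disjoint (A i j ∪ B i j) (A i j' ∪ B i j')) ∧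
        -- all copies are edge-disjoint
        (∀ i j i' j', (i, j) ≠ (i', j') →
          Disjoint ((A i j ×ˢ B i j).image fun q => s(q.1, q.2))
                   ((A i' j' ×ˢ B i' j').image fun q => s(q.1, q.2))) ∧
        ((G.edgeFinset \ Finset.univ.biUnion (fun i : Fin k =>
            Finset.univ.biUnion fun j : Fin s =>
              (A i j ×ˢ B i j).image fun q => s(q.1, q.2))).card : ℝ)
          ≤ 4 * (n : ℝ) ^ 2 / Real.sqrt t := by
  refine ⟨kstThreshold t, fun n hn k hk₁ hk₂ V _ _ hV G _ => ?_⟩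
  subst hV
  have hn₂ : 2 * t ^ 2 ≤ card V :=
    calc 2 * t ^ 2 = t * (2 * t) := by ring
      _ ≤ kstThreshold t := Nat.mul_le_mul_left t (by omega)
      _ ≤ card V := hn
  obtain ⟨s, hfit, hsd, hlt⟩ := exists_largest_fitting_count #G.edgeFinset
    (card V * (card V / t)) (2 * t * card V) (k * t ^ 2) (by nlinarith)
  obtain ⟨A, B, hcopy, hdisj, hedge⟩ := exists_isKttForests ht hn s k G fun j hj => by
    rw [mul_left_comm k]; exact hfit j hj
  refine ⟨s, A, B, hcopy, hdisj,
    fun i j i' j' hne => pairwise_disjoint_crossEdges hdisj hedge hne, ?_⟩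
  change ((#(G.edgeFinset \ univ.biUnion fun i => forestEdges (A i) (B i)) : ℕ) : ℝ) ≤ _
  rw [card_edgeFinset_sdiff_biUnion_forestEdges hcopy hdisj hedge, Fintype.card_fin,
    Fintype.card_fin, mul_left_comm k]
  refine le_trans (Nat.cast_le.mpr ?_) (leftover_le (s := s) ht hn₂ hk₁ hk₂ ?_)
  · rw [add_one_mul, mul_add] at hlt; rw [add_one_mul]; omega
  · linarith [two_mul_card_edgeFinset_le_sq G]
end

section
/- Let $H_i \subseteq H_{i+1}'$ where the pair $(H_i, H_{i+1})$ is ascending (i.e., $H_i \cong H_{i+1}$ or $H_i \cong H_{i+1} \setminus e$ for some edge $e$), and let $M_i \subseteq H_i$, $M_{i+1} \subseteq H_{i+1}$ be isolated matchings. If either (a) $e(H_{i+1} \setminus M_{i+1}) = e(H_i \setminus M_i) + 1$, or (b) $e(H_{i+1} \setminus M_{i+1}) = e(H_i \setminus M_i)$ and $H_{i+1} \cong H_i$, then the pair $(H_i \setminus M_i, H_{i+1} \setminus M_{i+1})$ is ascending. -/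
/-- A pair of graphs `(A, B)` is ascending if `A ≅ B` or `A ≅ B - e` for some edge `e` of `B`. -/
def AscendingPair {V W : Type} (A : SimpleGraph V) (B : SimpleGraph W) : Prop :=
  IsoPieces A B ∨ ∃ e ∈ B.edgeSet, IsoPieces A (B.deleteEdges {e})

/-- `M` is an isolated matching of `G`: `M ≤ G`, its edges are pairwise vertex-disjoint, and
no vertex of `M` is incident to an edge of `G` outside `M`. -/
def IsIsolatedMatching {V : Type} (M G : SimpleGraph V) : Prop :=
  M ≤ G ∧ (∀ v w w' : V, M.Adj v w → M.Adj v w' → w = w') ∧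
    ∀ v ∈ M.support, ∀ w : V, G.Adj v w → M.Adj v w

/-!
The edges of an isolated matching are `K₂`-components. From isomorphic graphs one may delete any
`K₂`-component on each side and stay isomorphic: first compose the isomorphism with the
automorphism exchanging the image of the one component with the other. Removing the matchings
one edge at a time, `A ≅ B` and `e(M) = e(N)` give `A \ M ≅ B \ N`; if `e(M) = e(N) + 1`, keep
one edge of `M` and delete its image afterwards. When `A ≅ B - e`, delete `e` from `N` too and
count edges to see which of the two cases applies.
-/

open SimpleGraph Set

namespace SimpleGraph

variable {V W : Type*} {G H M : SimpleGraph V} {u v x y : V} {e : Sym2 V}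

theorem Iso.bijOn_support {G' : SimpleGraph W} (σ : G ≃g G') :
    BijOn σ G.support G'.support := by
  refine ⟨fun a ⟨b, hab⟩ => ⟨σ b, σ.map_adj_iff.2 hab⟩, σ.injective.injOn,
    fun a ⟨b, hab⟩ => ?_⟩
  exact ⟨σ.symm a, ⟨σ.symm b, σ.symm.map_adj_iff.2 hab⟩, σ.apply_symm_apply a⟩

theorem ncard_edgeSet_deleteEdges_add_one [Finite V] (he : e ∈ G.edgeSet) :
    (G.deleteEdges {e}).edgeSet.ncard + 1 = G.edgeSet.ncard := by
  rw [edgeSet_deleteEdges]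
  exact ncard_sdiff_singleton_add_one he

theorem deleteEdges_sdiff_deleteEdges (G M : SimpleGraph V) (s : Set (Sym2 V)) :
    G.deleteEdges s \ M.deleteEdges s = (G \ M).deleteEdges s := by
  ext a b
  simp only [sdiff_adj, deleteEdges_adj]
  tauto

theorem sdiff_deleteEdges_deleteEdges {s : Set (Sym2 V)} (hs : s ⊆ M.edgeSet) :
    (G \ M.deleteEdges s).deleteEdges s = G \ M := by
  ext a b
  simp only [sdiff_adj, deleteEdges_adj]
  have := @hs s(a, b)
  tauto

def IsIsolatedEdge (G : SimpleGraph V) (u v : V) : Prop :=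
  (∀ w, G.Adj u w ↔ w = v) ∧ ∀ w, G.Adj v w ↔ w = u

namespace IsIsolatedEdge

theorem adj (h : G.IsIsolatedEdge u v) : G.Adj u v := (h.1 v).2 rfl

theorem mono (h : G.IsIsolatedEdge u v) (hle : H ≤ G) (huv : H.Adj u v) :
    H.IsIsolatedEdge u v :=
  ⟨fun w => ⟨fun hw => (h.1 w).1 (hle hw), by rintro rfl; exact huv⟩,
    fun w => ⟨fun hw => (h.2 w).1 (hle hw), by rintro rfl; exact huv.symm⟩⟩

theorem exists_iso (huv : G.IsIsolatedEdge u v) (hxy : G.IsIsolatedEdge x y) :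
    ∃ σ : G ≃g G, s(σ u, σ v) = s(x, y) := by
  classical
  by_cases h : s(u, v) = s(x, y)
  · exact ⟨Iso.refl, h⟩
  have hux : u ≠ x := by rintro rfl; exact h (by rw [(huv.1 y).1 hxy.adj])
  have huy : u ≠ y := by rintro rfl; exact h (by rw [(huv.1 x).1 hxy.adj.symm, Sym2.eq_swap])
  have hvy : v ≠ y := by rintro rfl; exact h (by rw [(huv.2 x).1 hxy.adj.symm])
  -- Distinct isolated edges are disjoint, so swapping `u ↔ x` and `v ↔ y` is an automorphism.
  refine ⟨⟨(Equiv.swap v y).trans (Equiv.swap u x), fun {a b} => ?_⟩, ?_⟩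
  · simp only [Equiv.trans_apply, Equiv.swap_apply_def]
    split_ifs <;> grind [G.adj_comm, huv.1, huv.2, hxy.1, hxy.2, huv.adj.ne, hxy.adj.ne]
  · simp only [RelIso.coe_fn_mk, Equiv.trans_apply, Equiv.swap_apply_left,
      Equiv.swap_apply_of_ne_of_ne huv.adj.ne huy,
      Equiv.swap_apply_of_ne_of_ne huy.symm hxy.adj.ne']

end IsIsolatedEdge

end SimpleGraph

section Pieces

variable {V W : Type} {A G M : SimpleGraph V} {B N : SimpleGraph W} {f : V → W} {u v : V}
  {e : Sym2 V}

/-- `f` restricts to an isomorphism `A.induce A.support ≃g B.induce B.support`; unlike such an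
isomorphism, a map between the vertex types restricts directly to subgraphs. -/
def IsIsoOnSupport (A : SimpleGraph V) (B : SimpleGraph W) (f : V → W) : Prop :=
  BijOn f A.support B.support ∧
    ∀ v ∈ A.support, ∀ w ∈ A.support, A.Adj v w ↔ B.Adj (f v) (f w)

namespace IsIsoOnSupport

theorem adj (hf : IsIsoOnSupport A B f) (huv : A.Adj u v) : B.Adj (f u) (f v) :=
  (hf.2 u ⟨v, huv⟩ v ⟨u, huv.symm⟩).1 huv

theorem isoPieces (hf : IsIsoOnSupport A B f) : IsoPieces A B :=
  ⟨⟨hf.1.equiv f, fun {a b} => (hf.2 a a.2 b b.2).symm⟩⟩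

theorem comp_iso (hf : IsIsoOnSupport A B f) (σ : B ≃g B) : IsIsoOnSupport A B (σ ∘ f) :=
  ⟨σ.bijOn_support.comp hf.1, fun a ha b hb => (hf.2 a ha b hb).trans σ.map_adj_iff.symm⟩

theorem isIsolatedEdge (hf : IsIsoOnSupport A B f) (h : A.IsIsolatedEdge u v) :
    B.IsIsolatedEdge (f u) (f v) := by
  have transport :
      ∀ {a b}, (∀ w, A.Adj a w ↔ w = b) → ∀ w, B.Adj (f a) w ↔ w = f b := by
    intro a b hab w
    refine ⟨fun haw => ?_, by rintro rfl; exact hf.adj ((hab b).2 rfl)⟩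
    obtain ⟨c, hc, rfl⟩ := hf.1.surjOn ⟨f a, haw.symm⟩
    have ha : a ∈ A.support := ⟨b, (hab b).2 rfl⟩
    rw [(hab c).1 ((hf.2 a ha c hc).2 haw)]
  exact ⟨transport h.1, transport h.2⟩

theorem of_le (hf : IsIsoOnSupport A B f) {A' : SimpleGraph V} {B' : SimpleGraph W}
    (hA : A' ≤ A) (hB : B' ≤ B)
    (hadj : ∀ v ∈ A.support, ∀ w ∈ A.support, A'.Adj v w ↔ B'.Adj (f v) (f w)) :
    IsIsoOnSupport A' B' f := by
  have hA' : A'.support ⊆ A.support := support_mono hA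
  refine ⟨⟨fun a ⟨b, hab⟩ => ?_, hf.1.injOn.mono hA', fun y ⟨z, hyz⟩ => ?_⟩,
    fun a ha b hb => hadj a (hA' ha) b (hA' hb)⟩
  · exact ⟨f b, (hadj a (hA' ⟨b, hab⟩) b (hA' ⟨a, hab.symm⟩)).1 hab⟩
  · obtain ⟨a, ha, rfl⟩ := hf.1.surjOn ⟨z, hB hyz⟩
    obtain ⟨b, hb, rfl⟩ := hf.1.surjOn ⟨f a, (hB hyz).symm⟩
    exact ⟨a, ⟨b, (hadj a ha b hb).2 hyz⟩, rfl⟩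

theorem deleteEdges (hf : IsIsoOnSupport A B f) (huv : A.Adj u v) :
    IsIsoOnSupport (A.deleteEdges {s(u, v)}) (B.deleteEdges {s(f u, f v)}) f := by
  refine hf.of_le (deleteEdges_le _) (deleteEdges_le _) fun a ha b hb => ?_
  have hu : u ∈ A.support := ⟨v, huv⟩
  have hv : v ∈ A.support := ⟨u, huv.symm⟩
  simp only [deleteEdges_adj, mem_singleton_iff, Sym2.eq_iff, hf.1.injOn.eq_iff ha hu,
    hf.1.injOn.eq_iff ha hv, hf.1.injOn.eq_iff hb hu, hf.1.injOn.eq_iff hb hv, hf.2 a ha b hb]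

end IsIsoOnSupport

namespace IsIsolatedMatching

theorem isIsolatedEdge (hM : IsIsolatedMatching M G) (huv : M.Adj u v) :
    G.IsIsolatedEdge u v := by
  have nbhd : ∀ {a b}, M.Adj a b → ∀ w, G.Adj a w ↔ w = b := fun hab _ =>
    ⟨fun h => hM.2.1 _ _ _ (hM.2.2 _ ⟨_, hab⟩ _ h) hab, by rintro rfl; exact hM.1 hab⟩
  exact ⟨nbhd huv, nbhd huv.symm⟩

theorem isIsolatedEdge_sdiff_deleteEdges (hM : IsIsolatedMatching M G) (huv : M.Adj u v) :
    (G \ M.deleteEdges {s(u, v)}).IsIsolatedEdge u v :=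
  (hM.isIsolatedEdge huv).mono sdiff_le <| by
    rw [sdiff_adj, deleteEdges_adj]
    exact ⟨hM.1 huv, fun h => h.2 rfl⟩

theorem deleteEdges_left (hM : IsIsolatedMatching M G) (s : Set (Sym2 V)) :
    IsIsolatedMatching (M.deleteEdges s) G := by
  refine ⟨(deleteEdges_le s).trans hM.1, fun a b b' h h' => hM.2.1 a b b' h.1 h'.1, ?_⟩
  rintro a ⟨b, hab⟩ w haw
  rwa [hM.2.1 a w b (hM.2.2 a ⟨b, hab.1⟩ w haw) hab.1]

theorem deleteEdges (hM : IsIsolatedMatching M G) (s : Set (Sym2 V)) :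
    IsIsolatedMatching (M.deleteEdges s) (G.deleteEdges s) :=
  ⟨deleteEdges_mono hM.1, (hM.deleteEdges_left s).2.1,
    fun a ha w haw => ⟨hM.2.2 a (support_mono (deleteEdges_le s) ha) w haw.1, haw.2⟩⟩

theorem ncard_edgeSet [Finite V] (hM : IsIsolatedMatching M G) :
    G.edgeSet.ncard = (G \ M).edgeSet.ncard + M.edgeSet.ncard := by
  rw [edgeSet_sdiff, ncard_sdiff_add_ncard_of_subset (edgeSet_subset_edgeSet.2 hM.1)]

end IsIsolatedMatching

namespace IsoPieces

theorem nonempty_of_adj (h : IsoPieces A B) (huv : A.Adj u v) : Nonempty W :=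
  let ⟨φ⟩ := h
  ⟨φ ⟨u, v, huv⟩⟩

theorem exists_isIsoOnSupport [Nonempty W] (h : IsoPieces A B) : ∃ f, IsIsoOnSupport A B f := by
  classical
  obtain ⟨φ⟩ := h
  let f : V → W := fun v => if hv : v ∈ A.support then φ ⟨v, hv⟩ else Classical.arbitrary W
  have hf : ∀ v (hv : v ∈ A.support), f v = φ ⟨v, hv⟩ := fun v hv => dif_pos hv
  refine ⟨f, ⟨fun v hv => hf v hv ▸ (φ ⟨v, hv⟩).2, fun v hv w hw hvw => ?_,
    fun y hy => ?_⟩, fun v hv w hw => ?_⟩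
  · rw [hf v hv, hf w hw] at hvw
    simpa using φ.injective (Subtype.ext hvw)
  · exact ⟨φ.symm ⟨y, hy⟩, (φ.symm ⟨y, hy⟩).2, by simp [hf]⟩
  · rw [hf v hv, hf w hw]
    exact (φ.map_adj_iff (v := ⟨v, hv⟩) (w := ⟨w, hw⟩)).symm

theorem ncard_edgeSet_eq [Fintype V] [Fintype W] (h : IsoPieces A B) :
    A.edgeSet.ncard = B.edgeSet.ncard := by
  classical
  obtain ⟨φ⟩ := h
  rw [← coe_edgeFinset, ← coe_edgeFinset, ncard_coe_finset, ncard_coe_finset,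
    ← card_edgeFinset_induce_support, ← card_edgeFinset_induce_support (G := B),
    φ.card_edgeFinset_eq]

theorem exists_deleteEdges (h : IsoPieces A B) (he : e ∈ A.edgeSet) :
    ∃ e' ∈ B.edgeSet, IsoPieces (A.deleteEdges {e}) (B.deleteEdges {e'}) := by
  induction e using Sym2.ind with
  | _ u v =>
    have := h.nonempty_of_adj he
    obtain ⟨f, hf⟩ := h.exists_isIsoOnSupport
    exact ⟨s(f u, f v), hf.adj he, (hf.deleteEdges he).isoPieces⟩

theorem deleteEdges_of_isIsolatedEdge (h : IsoPieces A B) (huv : A.IsIsolatedEdge u v)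
    {x y : W} (hxy : B.IsIsolatedEdge x y) :
    IsoPieces (A.deleteEdges {s(u, v)}) (B.deleteEdges {s(x, y)}) := by
  have := h.nonempty_of_adj huv.adj
  obtain ⟨f, hf⟩ := h.exists_isIsoOnSupport
  obtain ⟨σ, hσ⟩ := (hf.isIsolatedEdge huv).exists_iso hxy
  simpa only [Function.comp_apply, hσ] using ((hf.comp_iso σ).deleteEdges huv.adj).isoPieces

theorem sdiff_of_ncard_eq [Finite V] [Finite W] (h : IsoPieces A B)
    (hM : IsIsolatedMatching M A) (hN : IsIsolatedMatching N B)
    (hc : M.edgeSet.ncard = N.edgeSet.ncard) : IsoPieces (A \ M) (B \ N) := by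
  induction hn : N.edgeSet.ncard generalizing M N with
  | zero =>
    rw [edgeSet_eq_empty.1 ((ncard_eq_zero).1 (hc.trans hn)),
      edgeSet_eq_empty.1 ((ncard_eq_zero).1 hn)]
    simpa only [sdiff_bot] using h
  | succ n ih =>
    obtain ⟨e, he⟩ := nonempty_of_ncard_ne_zero (s := M.edgeSet) (by omega)
    obtain ⟨e', he'⟩ := nonempty_of_ncard_ne_zero (s := N.edgeSet) (by omega)
    induction e using Sym2.ind with | _ u v =>
    induction e' using Sym2.ind with | _ x y =>
    have hM' := ncard_edgeSet_deleteEdges_add_one he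
    have hN' := ncard_edgeSet_deleteEdges_add_one he'
    have hiso := ih (hM.deleteEdges_left {s(u, v)}) (hN.deleteEdges_left {s(x, y)})
      (by omega) (by omega)
    rw [← sdiff_deleteEdges_deleteEdges (singleton_subset_iff.2 he),
      ← sdiff_deleteEdges_deleteEdges (singleton_subset_iff.2 he')]
    exact hiso.deleteEdges_of_isIsolatedEdge (hM.isIsolatedEdge_sdiff_deleteEdges he)
      (hN.isIsolatedEdge_sdiff_deleteEdges he')

theorem exists_sdiff_deleteEdges_of_ncard_eq_succ [Finite V] [Finite W] (h : IsoPieces A B)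
    (hM : IsIsolatedMatching M A) (hN : IsIsolatedMatching N B)
    (hc : M.edgeSet.ncard = N.edgeSet.ncard + 1) :
    ∃ e ∈ (B \ N).edgeSet, IsoPieces (A \ M) ((B \ N).deleteEdges {e}) := by
  obtain ⟨e, he⟩ := nonempty_of_ncard_ne_zero (s := M.edgeSet) (by omega)
  have hM' := ncard_edgeSet_deleteEdges_add_one he
  have hiso := h.sdiff_of_ncard_eq (hM.deleteEdges_left {e}) hN (by omega)
  rw [← sdiff_deleteEdges_deleteEdges (singleton_subset_iff.2 he)]
  refine hiso.exists_deleteEdges ?_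
  rw [edgeSet_sdiff, edgeSet_deleteEdges]
  exact ⟨edgeSet_subset_edgeSet.2 hM.1 he, fun h => h.2 rfl⟩

theorem exists_sdiff_deleteEdges_of_deleteEdges [Fintype V] [Fintype W] {e : Sym2 W}
    (h : IsoPieces A (B.deleteEdges {e})) (he : e ∈ B.edgeSet)
    (hM : IsIsolatedMatching M A) (hN : IsIsolatedMatching N B)
    (hc : (B \ N).edgeSet.ncard = (A \ M).edgeSet.ncard + 1) :
    ∃ e' ∈ (B \ N).edgeSet, IsoPieces (A \ M) ((B \ N).deleteEdges {e'}) := by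
  have hN' := hN.deleteEdges {e}
  have hcount := h.ncard_edgeSet_eq
  rw [hM.ncard_edgeSet, hN'.ncard_edgeSet, deleteEdges_sdiff_deleteEdges] at hcount
  by_cases heN : e ∈ N.edgeSet
  · have hBN : (B \ N).deleteEdges {e} = B \ N := by
      rw [deleteEdges_eq_self, disjoint_singleton_right, edgeSet_sdiff]
      exact fun h => h.2 heN
    rw [hBN] at hcount
    simpa only [deleteEdges_sdiff_deleteEdges, hBN] using
      h.exists_sdiff_deleteEdges_of_ncard_eq_succ hM hN' (by omega)
  · have hNe : N.deleteEdges {e} = N := deleteEdges_eq_self.2 (disjoint_singleton_right.2 heN)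
    have heBN : e ∈ (B \ N).edgeSet := by rw [edgeSet_sdiff]; exact ⟨he, heN⟩
    have := ncard_edgeSet_deleteEdges_add_one heBN
    rw [hNe] at hcount
    refine ⟨e, heBN, ?_⟩
    rw [← deleteEdges_sdiff_deleteEdges]
    exact h.sdiff_of_ncard_eq hM hN' (by rw [hNe]; omega)

end IsoPieces

end Pieces

/-- If `(A, B)` is an ascending pair, `M ⊆ A` and `N ⊆ B` are isolated matchings, and either
`e(B - N) = e(A - M) + 1`, or `e(B - N) = e(A - M)` and `A ≅ B`, then `(A - M, B - N)` is
an ascending pair. -/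
theorem ascending_after_deleting_isolated_matchings {V W : Type} [Fintype V] [Fintype W]
    (A M : SimpleGraph V) (B N : SimpleGraph W)
    (hAB : AscendingPair A B)
    (hM : IsIsolatedMatching M A) (hN : IsIsolatedMatching N B)
    (hcase : (B \ N).edgeSet.ncard = (A \ M).edgeSet.ncard + 1 ∨
      ((B \ N).edgeSet.ncard = (A \ M).edgeSet.ncard ∧ IsoPieces A B)) :
    AscendingPair (A \ M) (B \ N) := by
  rcases hcase with hc | ⟨hc, hiso⟩
  · right
    rcases hAB with hiso | ⟨e, he, hiso⟩
    · have hcount := hiso.ncard_edgeSet_eq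
      rw [hM.ncard_edgeSet, hN.ncard_edgeSet] at hcount
      exact hiso.exists_sdiff_deleteEdges_of_ncard_eq_succ hM hN (by omega)
    · exact hiso.exists_sdiff_deleteEdges_of_deleteEdges he hM hN hc
  · have hcount := hiso.ncard_edgeSet_eq
    rw [hM.ncard_edgeSet, hN.ncard_edgeSet] at hcount
    exact Or.inl (hiso.sdiff_of_ncard_eq hM hN (by omega))
end
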